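/- arXiv:2312.03956 — 5 statements merged into one kernel-verified Lean document; each statement's English description precedes it below -/
import Mathlib

section
/- Let w be a segmented Smirnov word of length n with k ascents and l descents whose letters are all strictly less than m. The q-enumerator, with respect to sminv, over all words obtained from w by replacing s of its block separators with the letter m (inserting m as a peak), equals the Gaussian binomial coefficient [n−k−l−1 choose s]_q times q^{sminv(w)}. -/
/-- A word `w` together with a set `B` of block-start positions is a segmented
Smirnov word: block starts are valid positions, position `0` starts a block,
letters are positive, and two adjacent letters inside a common block differ. -/
def IsSSW (w : List ℕ) (B : Finset ℕ) : Prop :=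
  (∀ b ∈ B, b < w.length) ∧ (w ≠ [] → 0 ∈ B) ∧ (∀ x ∈ w, 0 < x) ∧
  (∀ i, i + 1 < w.length → (i + 1) ∉ B → w.getD i 0 ≠ w.getD (i + 1) 0)

def AscentAt (w : List ℕ) (B : Finset ℕ) (i : ℕ) : Prop :=
  i + 1 < w.length ∧ (i + 1) ∉ B ∧ w.getD i 0 < w.getD (i + 1) 0

def DescentAt (w : List ℕ) (B : Finset ℕ) (i : ℕ) : Prop :=
  i + 1 < w.length ∧ (i + 1) ∉ B ∧ w.getD (i + 1) 0 < w.getD i 0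

noncomputable def numAsc (w : List ℕ) (B : Finset ℕ) : ℕ := Set.ncard {i | AscentAt w B i}

noncomputable def numDesc (w : List ℕ) (B : Finset ℕ) : ℕ := Set.ncard {i | DescentAt w B i}

/-- `(i,j)` is a sminversion of the segmented word `(w, B)`. -/
def Sminversion (w : List ℕ) (B : Finset ℕ) (i j : ℕ) : Prop :=
  i < j ∧ j < w.length ∧ w.getD j 0 < w.getD i 0 ∧
    (j ∈ B ∨ w.getD i 0 < w.getD (j - 1) 0 ∨
     (i + 1 ≠ j ∧ w.getD (j - 1) 0 = w.getD i 0 ∧ (j - 1) ∈ B) ∨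
     (i + 1 ≠ j ∧ 2 ≤ j ∧ w.getD (j - 1) 0 < w.getD (j - 2) 0 ∧
       w.getD (j - 1) 0 = w.getD i 0))

noncomputable def sminv (w : List ℕ) (B : Finset ℕ) : ℕ :=
  Set.ncard {p : ℕ × ℕ | Sminversion w B p.1 p.2}

/-- The q-analogue `[m]_q = 1 + q + ⋯ + q^{m-1}` as a polynomial. -/
noncomputable def qInt (m : ℕ) : Polynomial ℕ := ∑ i ∈ Finset.range m, Polynomial.X ^ i

/-- The Gaussian binomial coefficient, via the q-Pascal recurrence. -/
noncomputable def qbinom : ℕ → ℕ → Polynomial ℕ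
  | _, 0 => 1
  | 0, _ + 1 => 0
  | n + 1, k + 1 => qbinom n k + Polynomial.X ^ (k + 1) * qbinom n (k + 1)

/-- Insert the letter `m` immediately before every (original) position in `S`;
the first argument is the index of the head of the remaining list. -/
def multiInsert (m : ℕ) (S : Finset ℕ) : ℕ → List ℕ → List ℕ
  | i, [] => if i ∈ S then [m] else []
  | i, x :: xs => (if i ∈ S then [m] else []) ++ x :: multiInsert m S (i + 1) xs

/-!
Replacing the separators in `S` by peaks moves letter `j` of `w` to position `letterPos S j` and
puts the new letters `m` at positions `peakPos S b`, `b ∈ S`. As `m` exceeds every letter, no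
sminversion ends at a new `m`, and the transported pairs of old letters are sminversions exactly
when the original pairs were. The new `m` at separator `b` forms a sminversion precisely with the
first letter of each later block that is still separated, so
`sminv = sminv w + ∑ b ∈ S, #{b' ∈ B \ S | b < b'}`. Summed over the `s`-subsets of the
separators this gives the Gaussian binomial by the q-Pascal recurrence (split on whether the
largest separator is chosen). Finally every adjacent pair of `w` is a separator, an ascent or a
descent, so there are `n - k - l - 1` separators.
-/

open Finset

section MultiInsert

variable (m : ℕ) (S : Finset ℕ)

theorem mem_multiInsert {x : ℕ} : ∀ {i : ℕ} {w : List ℕ},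
    x ∈ multiInsert m S i w → x = m ∨ x ∈ w
  | i, [] => by unfold multiInsert; split_ifs <;> simp_all
  | i, y :: ys => by
    unfold multiInsert
    intro hx
    have ih := @mem_multiInsert x (i + 1) ys
    split_ifs at hx <;> simp at hx <;> grind

theorem length_multiInsert : ∀ (i : ℕ) (w : List ℕ),
    (multiInsert m S i w).length =
      w.length + ∑ k ∈ range (w.length + 1), if i + k ∈ S then 1 else 0
  | i, [] => by
    simp only [multiInsert, List.length_nil, zero_add, sum_range_one, add_zero]
    split_ifs <;> simp_all
  | i, y :: ys => by
    unfold multiInsert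
    rw [List.length_cons, sum_range_succ', List.length_append, List.length_cons,
      length_multiInsert (i + 1) ys]
    simp only [← add_assoc, add_right_comm i _ 1, add_zero]
    generalize (∑ k ∈ range (ys.length + 1), (_ : ℕ)) = c
    split_ifs <;> simp only [List.length_cons, List.length_nil] <;> omega

theorem getD_multiInsert_letter : ∀ (i : ℕ) (w : List ℕ) (j : ℕ), j < w.length →
    (multiInsert m S i w).getD (j + ∑ k ∈ range (j + 1), if i + k ∈ S then 1 else 0) 0 =
      w.getD j 0
  | i, [], j, hj => by simp at hj
  | i, y :: ys, 0, _ => by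
    simp only [multiInsert, zero_add, sum_range_one, add_zero]
    split_ifs <;> simp_all
  | i, y :: ys, j + 1, hj => by
    have ih := getD_multiInsert_letter (i + 1) ys j (by simpa using hj)
    unfold multiInsert
    rw [sum_range_succ']
    simp only [← add_assoc, add_right_comm i _ 1, add_zero] at ih ⊢
    generalize (∑ k ∈ range (j + 1), (_ : ℕ)) = c at ih ⊢
    split_ifs
    · rw [show j + 1 + c + 1 = j + c + 1 + 1 by omega]
      simpa using ih
    · rw [show j + 1 + c + 0 = j + c + 1 by omega]
      simpa using ih

theorem getD_multiInsert_peak :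
    ∀ (i : ℕ) (w : List ℕ) (j : ℕ), j ≤ w.length → i + j ∈ S →
      (multiInsert m S i w).getD (j + ∑ k ∈ range j, if i + k ∈ S then 1 else 0) 0 = m
  | i, [], j, hj, hS => by simp_all [multiInsert]
  | i, y :: ys, 0, _, hS => by simp_all [multiInsert]
  | i, y :: ys, j + 1, hj, hS => by
    have ih := getD_multiInsert_peak (i + 1) ys j (by simpa using hj) (by rwa [add_right_comm])
    unfold multiInsert
    rw [sum_range_succ']
    simp only [← add_assoc, add_right_comm i _ 1, add_zero] at ih ⊢
    generalize (∑ k ∈ range j, (_ : ℕ)) = c at ih ⊢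
    split_ifs
    · rw [show j + 1 + c + 1 = j + c + 1 + 1 by omega]
      simpa using ih
    · rw [show j + 1 + c + 0 = j + c + 1 by omega]
      simpa using ih

end MultiInsert

/-- In `multiInsert m S 0 w`, the letter at position `j` of `w` moves to `letterPos S j`, and the
`m` inserted before position `b ∈ S` sits at `peakPos S b`. -/
def letterPos (S : Finset ℕ) (j : ℕ) : ℕ := j + #{b ∈ S | b ≤ j}

def peakPos (S : Finset ℕ) (b : ℕ) : ℕ := b + #{b' ∈ S | b' < b}

section Positions

variable (S : Finset ℕ)

theorem letterPos_strictMono : StrictMono (letterPos S) := fun _ _ hab =>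
  Nat.add_lt_add_of_lt_of_le hab <|
    card_le_card <| monotone_filter_right S fun _ _ h => h.trans hab.le

theorem peakPos_strictMono : StrictMono (peakPos S) := fun _ _ hab =>
  Nat.add_lt_add_of_lt_of_le hab <| card_le_card <| monotone_filter_right S fun _ _ h => h.trans hab

@[simp] theorem peakPos_zero : peakPos S 0 = 0 := by simp [peakPos]

theorem peakPos_succ (j : ℕ) : peakPos S (j + 1) = letterPos S j + 1 := by
  simp only [peakPos, letterPos, Nat.lt_succ_iff]
  omega

variable {S}

theorem letterPos_of_mem {b : ℕ} (hb : b ∈ S) : letterPos S b = peakPos S b + 1 := by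
  have : {x ∈ S | x ≤ b} = insert b {x ∈ S | x < b} := by
    ext x
    simp only [mem_filter, mem_insert, le_iff_lt_or_eq]
    grind
  rw [letterPos, peakPos, this, card_insert_of_notMem (by simp)]
  omega

theorem letterPos_of_notMem {b : ℕ} (hb : b ∉ S) : letterPos S b = peakPos S b := by
  simp only [letterPos, peakPos]
  congr 2
  ext x
  simp only [mem_filter, le_iff_lt_or_eq]
  grind

theorem peakPos_le_letterPos (b : ℕ) : peakPos S b ≤ letterPos S b :=
  Nat.add_le_add_left (card_le_card <| monotone_filter_right S fun _ _ h => h.le) b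

theorem letterPos_sub_one_of_notMem {j : ℕ} (hj : j ∉ S) :
    letterPos S j - 1 = letterPos S (j - 1) := by
  rcases j with _ | j
  · simp [letterPos_of_notMem hj]
  · rw [letterPos_of_notMem hj, peakPos_succ, Nat.add_sub_cancel, Nat.add_sub_cancel]

theorem letterPos_lt_peakPos_iff {j b : ℕ} : letterPos S j < peakPos S b ↔ j < b := by
  constructor
  · intro h
    by_contra! hbj
    exact h.not_ge <| (peakPos_le_letterPos b).trans <| (letterPos_strictMono S).monotone hbj
  · intro hjb
    rw [← Nat.add_one_le_iff, ← peakPos_succ]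
    exact (peakPos_strictMono S).monotone hjb

theorem peakPos_lt_letterPos_iff {j b : ℕ} (hb : b ∈ S) :
    peakPos S b < letterPos S j ↔ b ≤ j := by
  constructor
  · intro h
    by_contra! hjb
    exact h.not_gt <| letterPos_lt_peakPos_iff.2 hjb
  · intro hbj
    rw [← Nat.add_one_le_iff, ← letterPos_of_mem hb]
    exact (letterPos_strictMono S).monotone hbj

theorem letterPos_ne_peakPos {j b : ℕ} (hb : b ∈ S) : letterPos S j ≠ peakPos S b := by
  rcases lt_or_ge j b with hjb | hbj
  · exact (letterPos_lt_peakPos_iff.2 hjb).ne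
  · exact ((peakPos_lt_letterPos_iff hb).2 hbj).ne'

theorem exists_letterPos_or_peakPos {n t : ℕ} (ht : t < letterPos S n) :
    (∃ j < n, letterPos S j = t) ∨ ∃ b ∈ S, b ≤ n ∧ peakPos S b = t := by
  induction n generalizing t with
  | zero =>
    by_cases h0 : 0 ∈ S
    · rw [letterPos_of_mem h0, peakPos_zero] at ht
      exact Or.inr ⟨0, h0, le_rfl, by simp; omega⟩
    · rw [letterPos_of_notMem h0, peakPos_zero] at ht
      omega
  | succ n ih =>
    rcases lt_or_ge t (letterPos S n) with htn | htn
    · rcases ih htn with ⟨j, hj, rfl⟩ | ⟨b, hb, hbn, rfl⟩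
      · exact Or.inl ⟨j, by omega, rfl⟩
      · exact Or.inr ⟨b, hb, by omega, rfl⟩
    rcases htn.eq_or_lt with rfl | htn
    · exact Or.inl ⟨n, by omega, rfl⟩
    by_cases hn : n + 1 ∈ S
    · rw [letterPos_of_mem hn, peakPos_succ] at ht
      exact Or.inr ⟨n + 1, hn, le_rfl, by rw [peakPos_succ]; omega⟩
    · rw [letterPos_of_notMem hn, peakPos_succ] at ht
      omega

end Positions

section LetterPositions

variable (m : ℕ) (S : Finset ℕ) (w : List ℕ)

theorem sum_range_ite_mem_eq_card (j : ℕ) :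
    (∑ k ∈ range j, if 0 + k ∈ S then 1 else 0) = #{b ∈ S | b < j} := by
  rw [sum_boole, Nat.cast_id]
  congr 1
  ext b
  simp [and_comm]

theorem length_multiInsert_zero : (multiInsert m S 0 w).length = letterPos S w.length := by
  rw [length_multiInsert, sum_range_ite_mem_eq_card, letterPos]
  simp only [Nat.lt_succ_iff]

variable {m S w}

theorem getD_multiInsert_letterPos {j : ℕ} (hj : j < w.length) :
    (multiInsert m S 0 w).getD (letterPos S j) 0 = w.getD j 0 := by
  have := getD_multiInsert_letter m S 0 w j hj
  simpa only [sum_range_ite_mem_eq_card, Nat.lt_succ_iff, letterPos] using this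

theorem getD_multiInsert_peakPos {b : ℕ} (hb : b ∈ S) (hbn : b ≤ w.length) :
    (multiInsert m S 0 w).getD (peakPos S b) 0 = m := by
  have := getD_multiInsert_peak m S 0 w b hbn (by simpa using hb)
  rwa [sum_range_ite_mem_eq_card] at this

theorem getD_multiInsert_le (hm : ∀ x ∈ w, x ≤ m) (t : ℕ) :
    (multiInsert m S 0 w).getD t 0 ≤ m := by
  rw [List.getD_eq_getElem?_getD]
  rcases h : (multiInsert m S 0 w)[t]? with _ | x
  · simp
  · rcases mem_multiInsert m S (List.mem_of_getElem? h) with rfl | hx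
    · rfl
    · exact hm x hx

end LetterPositions

section Sminversion

variable {w : List ℕ} {B S : Finset ℕ} {m : ℕ}

theorem letterPos_mem_image_sdiff_iff {j : ℕ} :
    letterPos S j ∈ (B \ S).image (letterPos S) ↔ j ∈ B ∧ j ∉ S :=
  (letterPos_strictMono S).injective.mem_finset_image.trans mem_sdiff

theorem getD_lt_of_forall_lt (hm : ∀ x ∈ w, x < m) {j : ℕ} (hj : j < w.length) :
    w.getD j 0 < m := by
  rw [List.getD_eq_getElem _ _ hj]
  exact hm _ (List.getElem_mem hj)

theorem sminversion_peakPos_letterPos_iff (hB : ∀ b ∈ B, b < w.length) (hm : ∀ x ∈ w, x < m)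
    {b j : ℕ} (hb : b ∈ S) (hbn : b ≤ w.length) (hj : j < w.length) :
    Sminversion (multiInsert m S 0 w) ((B \ S).image (letterPos S)) (peakPos S b)
      (letterPos S j) ↔ b < j ∧ j ∈ B ∧ j ∉ S := by
  have hWb : (multiInsert m S 0 w).getD (peakPos S b) 0 = m := getD_multiInsert_peakPos hb hbn
  have hle := getD_multiInsert_le (S := S) (fun x hx => (hm x hx).le)
  constructor
  · rintro ⟨hlt, -, -, hcl⟩
    have hbj := (peakPos_lt_letterPos_iff hb).1 hlt
    rcases hcl with hjB | hgt | ⟨-, heq, hmem⟩ | ⟨-, -, hgt, heq⟩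
    · obtain ⟨hjB, hjS⟩ := letterPos_mem_image_sdiff_iff.1 hjB
      exact ⟨hbj.lt_of_ne (by rintro rfl; exact hjS hb), hjB, hjS⟩
    · rw [hWb] at hgt
      exact absurd (hle _) hgt.not_ge
    · obtain ⟨b', hb', hb'j⟩ := mem_image.1 hmem
      have hb'n := hB b' (mem_sdiff.1 hb').1
      rw [hWb, ← hb'j, getD_multiInsert_letterPos hb'n] at heq
      exact absurd heq (getD_lt_of_forall_lt hm hb'n).ne
    · rw [heq, hWb] at hgt
      exact absurd (hle _) hgt.not_ge
  · rintro ⟨hbj, hjB, hjS⟩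
    refine ⟨(peakPos_lt_letterPos_iff hb).2 hbj.le, ?_, ?_,
      Or.inl (letterPos_mem_image_sdiff_iff.2 ⟨hjB, hjS⟩)⟩
    · rw [length_multiInsert_zero]
      exact letterPos_strictMono S hj
    · rw [getD_multiInsert_letterPos hj, hWb]
      exact getD_lt_of_forall_lt hm hj

theorem sminversion_letterPos_letterPos_iff (hm : ∀ x ∈ w, x < m) (hSB : S ⊆ B) {i j : ℕ} :
    Sminversion (multiInsert m S 0 w) ((B \ S).image (letterPos S)) (letterPos S i)
      (letterPos S j) ↔ Sminversion w B i j := by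
  have hmono := letterPos_strictMono S
  simp only [Sminversion]
  rw [hmono.lt_iff_lt, length_multiInsert_zero, hmono.lt_iff_lt]
  refine and_congr_right fun hij => and_congr_right fun hjn => ?_
  rw [getD_multiInsert_letterPos hjn, getD_multiInsert_letterPos (hij.trans hjn)]
  refine and_congr_right fun hval => ?_
  obtain ⟨j, rfl⟩ : ∃ j', j = j' + 1 := ⟨j - 1, by omega⟩
  have hwlt : ∀ k < w.length, w.getD k 0 < m := fun k hk => getD_lt_of_forall_lt hm hk
  by_cases hjS : j + 1 ∈ S
  -- the new word has the peak `m` right before letter `j + 1`; the old one has a block start there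
  · refine iff_of_true (Or.inr (Or.inl ?_)) (Or.inl (hSB hjS))
    rw [letterPos_of_mem hjS, Nat.add_sub_cancel, getD_multiInsert_peakPos hjS hjn.le]
    exact hwlt i (hij.trans hjn)
  have hadj : letterPos S i + 1 ≠ letterPos S j + 1 ↔ i + 1 ≠ j + 1 := by
    simp [hmono.injective.eq_iff]
  rw [letterPos_mem_image_sdiff_iff, letterPos_of_notMem hjS, peakPos_succ, Nat.add_sub_cancel,
    letterPos_mem_image_sdiff_iff, hadj, getD_multiInsert_letterPos (by omega : j < w.length),
    show letterPos S j + 1 - 2 = letterPos S j - 1 by omega, Nat.add_sub_cancel,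
    show j + 1 - 2 = j - 1 by omega]
  simp only [hjS, not_false_eq_true, and_true]
  by_cases hj'S : j ∈ S
  -- the new word has the peak `m` right before letter `j`, so its fourth clause takes the role of
  -- the third clause of the old word
  · rw [letterPos_of_mem hj'S, Nat.add_sub_cancel, getD_multiInsert_peakPos hj'S (by omega)]
    simp only [hj'S, hSB hj'S, hwlt j (by omega), not_true_eq_false, and_false, and_true,
      le_add_self, true_and, false_or]
    tauto
  · have h2 : 2 ≤ letterPos S j + 1 ↔ 2 ≤ j + 1 := by
      rcases j with _ | j
      · simp [letterPos_of_notMem hj'S]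
      · simp only [letterPos]; omega
    rw [letterPos_sub_one_of_notMem hj'S, getD_multiInsert_letterPos (by omega), h2]
    simp only [hj'S, not_false_eq_true, and_true]

theorem setOf_sminversion_multiInsert (hB : ∀ b ∈ B, b < w.length) (hm : ∀ x ∈ w, x < m)
    (hSB : S ⊆ B) :
    {p : ℕ × ℕ | Sminversion (multiInsert m S 0 w) ((B \ S).image (letterPos S)) p.1 p.2} =
      Prod.map (letterPos S) (letterPos S) '' {p | Sminversion w B p.1 p.2} ∪
        Prod.map (peakPos S) (letterPos S) '' ↑{p ∈ S ×ˢ (B \ S) | p.1 < p.2} := by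
  ext ⟨t₁, t₂⟩
  simp only [Set.mem_union, Set.mem_image, Set.mem_ofPred_eq, Prod.exists, Prod.map_apply,
    Prod.mk.injEq, coe_filter, mem_product]
  constructor
  · intro hsm
    have hlen : t₂ < letterPos S w.length := length_multiInsert_zero m S w ▸ hsm.2.1
    rcases exists_letterPos_or_peakPos hlen with ⟨j, hj, rfl⟩ | ⟨b, hb, hbn, rfl⟩
    · rcases exists_letterPos_or_peakPos (hsm.1.trans hlen) with
        ⟨i, -, rfl⟩ | ⟨b, hb, hbn, rfl⟩
      · exact Or.inl ⟨i, j, (sminversion_letterPos_letterPos_iff hm hSB).1 hsm, rfl, rfl⟩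
      · obtain ⟨hbj, hjB, hjS⟩ := (sminversion_peakPos_letterPos_iff hB hm hb hbn hj).1 hsm
        exact Or.inr ⟨b, j, ⟨⟨hb, mem_sdiff.2 ⟨hjB, hjS⟩⟩, hbj⟩, rfl, rfl⟩
    · have hval := hsm.2.2.1
      rw [getD_multiInsert_peakPos hb hbn] at hval
      exact absurd (getD_multiInsert_le (fun x hx => (hm x hx).le) t₁) hval.not_ge
  · rintro (⟨i, j, hij, rfl, rfl⟩ | ⟨b, j, ⟨⟨hb, hj⟩, hbj⟩, rfl, rfl⟩)
    · exact (sminversion_letterPos_letterPos_iff hm hSB).2 hij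
    · obtain ⟨hjB, hjS⟩ := mem_sdiff.1 hj
      exact (sminversion_peakPos_letterPos_iff hB hm hb (hB b (hSB hb)).le (hB j hjB)).2
        ⟨hbj, hjB, hjS⟩

end Sminversion

theorem finite_setOf_sminversion (w : List ℕ) (B : Finset ℕ) :
    {p : ℕ × ℕ | Sminversion w B p.1 p.2}.Finite :=
  ((Set.finite_Iio w.length).prod (Set.finite_Iio w.length)).subset
    fun _ hp => ⟨hp.1.trans hp.2.1, hp.2.1⟩

theorem sminv_multiInsert {w : List ℕ} {B S : Finset ℕ} {m : ℕ}
    (hB : ∀ b ∈ B, b < w.length) (hm : ∀ x ∈ w, x < m) (hSB : S ⊆ B) :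
    sminv (multiInsert m S 0 w) ((B \ S).image (letterPos S)) =
      sminv w B + ∑ b ∈ S, #{b' ∈ B \ S | b < b'} := by
  have hinj := (letterPos_strictMono S).injective
  have hdisj : Disjoint (Prod.map (letterPos S) (letterPos S) '' {p | Sminversion w B p.1 p.2})
      (Prod.map (peakPos S) (letterPos S) '' ↑{p ∈ S ×ˢ (B \ S) | p.1 < p.2}) := by
    rw [Set.disjoint_left]
    rintro _ ⟨p, -, rfl⟩ ⟨q, hq, hpq⟩
    simp only [coe_filter, mem_product, Set.mem_ofPred_eq] at hq
    exact letterPos_ne_peakPos hq.1.1 (congrArg Prod.fst hpq).symm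
  rw [sminv, setOf_sminversion_multiInsert hB hm hSB,
    Set.ncard_union_eq hdisj ((finite_setOf_sminversion w B).image _) (Set.toFinite _),
    Set.ncard_image_of_injective _ (hinj.prodMap hinj),
    Set.ncard_image_of_injective _ ((peakPos_strictMono S).injective.prodMap hinj),
    Set.ncard_coe_finset, card_filter, sum_product]
  simp only [← card_filter]
  rfl

section GaussianBinomial

open Polynomial

theorem qbinom_zero_right (n : ℕ) : qbinom n 0 = 1 := by
  cases n <;> rfl

theorem sum_powersetCard_X_pow_eq_qbinom {α : Type*} [LinearOrder α] (T : Finset α) (s : ℕ) :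
    ∑ S ∈ powersetCard s T, (X : ℕ[X]) ^ (∑ b ∈ S, #{b' ∈ T \ S | b < b'}) =
      qbinom #T s := by
  induction T using Finset.induction_on_max generalizing s with
  | empty => cases s <;> simp [qbinom]
  | insert a T hlt ih =>
    have ha : a ∉ T := fun h => (hlt a h).false
    rcases s with _ | s
    · simp [qbinom_zero_right]
    have hexp_of_notMem : ∀ S ∈ powersetCard (s + 1) T,
        ∑ b ∈ S, #{b' ∈ insert a T \ S | b < b'} =
          (s + 1) + ∑ b ∈ S, #{b' ∈ T \ S | b < b'} := by
      intro S hS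
      obtain ⟨hST, hcard⟩ := mem_powersetCard.1 hS
      rw [insert_sdiff_of_notMem _ fun h => ha (hST h), ← hcard, card_eq_sum_ones,
        ← sum_add_distrib]
      refine sum_congr rfl fun b hb => ?_
      rw [filter_insert, if_pos (hlt b (hST hb)), card_insert_of_notMem (by simp [ha]), add_comm]
    have hexp_insert : ∀ S ∈ powersetCard s T,
        ∑ b ∈ insert a S, #{b' ∈ insert a T \ insert a S | b < b'} =
          ∑ b ∈ S, #{b' ∈ T \ S | b < b'} := by
      intro S hS
      have haS : a ∉ S := fun h => ha ((mem_powersetCard.1 hS).1 h)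
      have hmax : #{b' ∈ T \ S | a < b'} = 0 := by
        simp only [card_eq_zero, filter_eq_empty_iff, mem_sdiff]
        exact fun x hx => (hlt x hx.1).not_gt
      rw [insert_sdiff_insert, sdiff_insert_of_notMem ha, sum_insert haS, hmax, zero_add]
    have hinj : Set.InjOn (insert a) (powersetCard s T : Set (Finset α)) :=
      fun S hS S' hS' h => by
        rw [← erase_insert (s := S) fun h => ha ((mem_powersetCard.1 hS).1 h),
          ← erase_insert (s := S') fun h => ha ((mem_powersetCard.1 hS').1 h), h]
    have hdisj : Disjoint (powersetCard (s + 1) T) ((powersetCard s T).image (insert a)) := by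
      rw [disjoint_left]
      intro S hS hS'
      obtain ⟨S', -, rfl⟩ := mem_image.1 hS'
      exact ha ((mem_powersetCard.1 hS).1 (mem_insert_self a S'))
    have hsum₁ : ∑ S ∈ powersetCard (s + 1) T,
        (X : ℕ[X]) ^ (∑ b ∈ S, #{b' ∈ insert a T \ S | b < b'}) =
          X ^ (s + 1) * qbinom #T (s + 1) := by
      rw [← ih, mul_sum]
      exact sum_congr rfl fun S hS => by rw [hexp_of_notMem S hS, pow_add]
    have hsum₂ : ∑ S ∈ powersetCard s T,
        (X : ℕ[X]) ^ (∑ b ∈ insert a S, #{b' ∈ insert a T \ insert a S | b < b'}) =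
          qbinom #T s := by
      rw [← ih]
      exact sum_congr rfl fun S hS => by rw [hexp_insert S hS]
    rw [powersetCard_succ_insert ha, sum_union hdisj, sum_image hinj, hsum₁, hsum₂,
      card_insert_of_notMem ha, qbinom, add_comm]

end GaussianBinomial

theorem ncard_setOf_eq_card_filter_range {p : ℕ → Prop} [DecidablePred p] {n : ℕ}
    (hp : ∀ i, p i → i < n) : {i | p i}.ncard = #{i ∈ range n | p i} := by
  rw [← Set.ncard_coe_finset]
  congr 1
  ext i
  simp only [Set.mem_ofPred_eq, coe_filter, mem_range]
  exact ⟨fun h => ⟨hp i h, h⟩, And.right⟩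

theorem card_erase_zero_add_numAsc_add_numDesc {w : List ℕ} {B : Finset ℕ}
    (hB : ∀ b ∈ B, b < w.length)
    (hw : ∀ i, i + 1 < w.length → i + 1 ∉ B → w.getD i 0 ≠ w.getD (i + 1) 0) :
    #(B.erase 0) + numAsc w B + numDesc w B = w.length - 1 := by
  classical
  have hAsc : numAsc w B = #{i ∈ range (w.length - 1) | AscentAt w B i} :=
    ncard_setOf_eq_card_filter_range fun i h => by have := h.1; omega
  have hDesc : numDesc w B = #{i ∈ range (w.length - 1) | DescentAt w B i} :=
    ncard_setOf_eq_card_filter_range fun i h => by have := h.1; omega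
  have hsep : #(B.erase 0) = #{i ∈ range (w.length - 1) | i + 1 ∈ B} := by
    refine card_nbij' (· - 1) (· + 1) (fun b hb => ?_) (fun i hi => ?_) (fun b hb => ?_)
      (fun i _ => rfl)
    · simp only [mem_coe, mem_erase, mem_filter, mem_range] at hb ⊢
      rw [Nat.sub_add_cancel (Nat.one_le_iff_ne_zero.2 hb.1)]
      exact ⟨by have := hB b hb.2; omega, hb.2⟩
    · simp only [mem_coe, mem_erase, mem_filter] at hi ⊢
      exact ⟨i.succ_ne_zero, hi.2⟩
    · simp only [mem_coe, mem_erase] at hb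
      exact Nat.sub_add_cancel (Nat.one_le_iff_ne_zero.2 hb.1)
  have hpart : {i ∈ range (w.length - 1) | i + 1 ∉ B} =
      {i ∈ range (w.length - 1) | AscentAt w B i} ∪
        {i ∈ range (w.length - 1) | DescentAt w B i} := by
    rw [← filter_or]
    refine filter_congr fun i hi => ?_
    have hi' : i + 1 < w.length := by rw [mem_range] at hi; omega
    simp only [AscentAt, DescentAt, hi', true_and]
    refine ⟨fun h => ?_, fun h => h.elim And.left And.left⟩
    rcases (hw i hi' h).lt_or_gt with hlt | hgt
    exacts [Or.inl ⟨h, hlt⟩, Or.inr ⟨h, hgt⟩]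
  have hdisj : Disjoint {i ∈ range (w.length - 1) | AscentAt w B i}
      {i ∈ range (w.length - 1) | DescentAt w B i} :=
    disjoint_filter.2 fun i _ hA hD => lt_asymm hA.2.2 hD.2.2
  rw [hAsc, hDesc, hsep, add_assoc, ← card_union_of_disjoint hdisj, ← hpart,
    card_filter_add_card_filter_not, card_range]

theorem image_peakPos_sdiff (B S : Finset ℕ) :
    (B \ S).image (peakPos S) = (B \ S).image (letterPos S) :=
  image_congr fun _ hb => (letterPos_of_notMem (mem_sdiff.1 hb).2).symm

/-- Peak insertion: for a segmented Smirnov word `w` of length `n` with `k`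
ascents, `l` descents and all letters `< m`, the q-enumerator (w.r.t. `sminv`)
of the words obtained by replacing `s` of the block separators of `w` by the
letter `m` is `[n-k-l-1 choose s]_q · q^{sminv w}`. -/
theorem stmt5 (w : List ℕ) (B : Finset ℕ) (m k l s : ℕ) (h : IsSSW w B)
    (hm : ∀ x ∈ w, x < m) (hk : numAsc w B = k) (hl : numDesc w B = l) :
    ∑ S ∈ Finset.powersetCard s (B.erase 0),
      Polynomial.X ^ sminv (multiInsert m S 0 w)
        ((B \ S).image (fun b => b + (S.filter (· < b)).card)) =
    qbinom (w.length - k - l - 1) s * Polynomial.X ^ sminv w B := by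
  have hcard : w.length - k - l - 1 = #(B.erase 0) := by
    have := card_erase_zero_add_numAsc_add_numDesc h.1 h.2.2.2
    omega
  have hfilter (b : ℕ) (S : Finset ℕ) :
      {b' ∈ B.erase 0 \ S | b < b'} = {b' ∈ B \ S | b < b'} := by
    ext x
    simp only [mem_filter, mem_sdiff, mem_erase]
    grind
  rw [hcard, ← sum_powersetCard_X_pow_eq_qbinom, sum_mul]
  refine sum_congr rfl fun S hS => ?_
  have hSB : S ⊆ B := (mem_powersetCard.1 hS).1.trans (erase_subset 0 B)
  rw [show (B \ S).image (fun b => b + #{b' ∈ S | b' < b}) = (B \ S).image (letterPos S) from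
    image_peakPos_sdiff B S, sminv_multiInsert h.1 hm hSB, pow_add, mul_comm]
  simp only [hfilter]
end

section
/- Let w be a segmented Smirnov word and m ≥ max w. If w̄ is obtained from w by inserting one occurrence of m as a double fall (at the start of a block), a double rise (at the end of a block), or a new singleton block, then every sminversion of w corresponds to a sminversion of w̄ (under the index shift induced by the insertion). If instead m is inserted as a peak (replacing a block separator), the same holds provided m > max w. -/
/-!
Inserting `m` at position `p` moves every letter from position `k` to `shiftIdx p k` and carries
every block start other than `p` along. The conditions defining a sminversion `(i, j)` only read
the letters at `j`, `j - 1`, `j - 2` and the block starts at `j`, `j - 1`, so they transfer verbatim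
unless the new letter `m` lands among them, i.e. `j = p` or `j = p + 1`. There `m` takes the role of
the letter before `j` (resp. two before), and maximality of `m` does the job, except when `m` ties
with the letter it is compared with. Such a tie is resolved by the block structure: after a double
fall `p` is still a block start, after a double rise or singleton `p + 1` is one, a peak has `m`
strictly maximal, and if `p + 1` is no block start the Smirnov condition on the new word forbids the
letter following `m` to equal `m`.
-/

def shiftIdx (p k : ℕ) : ℕ := if k < p then k else k + 1

section shiftIdx

variable {p i j : ℕ}

lemma shiftIdx_strictMono (p : ℕ) : StrictMono (shiftIdx p) := by
  intro i j hij
  unfold shiftIdx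
  split_ifs <;> omega

lemma le_shiftIdx (p k : ℕ) : k ≤ shiftIdx p k := by
  unfold shiftIdx; split_ifs <;> omega

lemma shiftIdx_le (p k : ℕ) : shiftIdx p k ≤ k + 1 := by
  unfold shiftIdx; split_ifs <;> omega

lemma shiftIdx_of_lt (h : i < p) : shiftIdx p i = i := if_pos h

lemma shiftIdx_of_le (h : p ≤ i) : shiftIdx p i = i + 1 := if_neg (Nat.not_lt.2 h)

lemma shiftIdx_sub_one (hj : j ≠ p) : shiftIdx p j - 1 = shiftIdx p (j - 1) := by
  unfold shiftIdx; split_ifs <;> omega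

lemma shiftIdx_sub_two (hj : j ≠ p) (hj' : j ≠ p + 1) :
    shiftIdx p j - 2 = shiftIdx p (j - 2) := by
  unfold shiftIdx; split_ifs <;> omega

lemma shiftIdx_add_one_sub_two (p : ℕ) : shiftIdx p (p + 1) - 2 = p := by
  rw [shiftIdx_of_le (Nat.le_succ p)]; rfl

lemma add_one_eq_of_shiftIdx_add_one_eq (h : shiftIdx p i + 1 = shiftIdx p j) : i + 1 = j := by
  unfold shiftIdx at h; split_ifs at h <;> omega

end shiftIdx

namespace List

variable {α : Type*}

lemma getD_insertIdx_shiftIdx (l : List α) (a : α) (p k : ℕ) (d : α) :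
    (l.insertIdx p a).getD (shiftIdx p k) d = l.getD k d := by
  unfold shiftIdx
  split_ifs with h
  · simp only [getD_eq_getElem?_getD, getElem?_insertIdx_of_lt h]
  · simp only [getD_eq_getElem?_getD, getElem?_insertIdx_of_gt (show p < k + 1 by omega),
      Nat.add_sub_cancel]

lemma getD_insertIdx_self {l : List α} {p : ℕ} (hp : p ≤ l.length) (a d : α) :
    (l.insertIdx p a).getD p d = a := by
  simp [getD_eq_getElem?_getD, getElem?_insertIdx_self, hp]

lemma getD_mem {l : List α} {k : ℕ} (hk : k < l.length) (d : α) : l.getD k d ∈ l := by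
  rw [getD_eq_getElem _ _ hk]
  exact getElem_mem hk

end List

def MaxInsertion (w : List ℕ) (B : Finset ℕ) (m p : ℕ) (B' : Finset ℕ) : Prop :=
  (p ∈ B ∧ B' = B.image (fun x => if p < x then x + 1 else x)) ∨
  ((p ∈ B ∨ p = w.length) ∧ p ≠ 0 ∧
    B' = B.image (fun x => if p ≤ x then x + 1 else x)) ∨
  ((p ∈ B ∨ p = w.length) ∧
    B' = insert p (B.image (fun x => if p ≤ x then x + 1 else x))) ∨
  ((∀ x ∈ w, x < m) ∧ p ∈ B ∧ p ≠ 0 ∧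
    B' = (B.erase p).image (fun x => if p ≤ x then x + 1 else x))

namespace MaxInsertion

variable {w : List ℕ} {B B' : Finset ℕ} {m p : ℕ}

lemma le_length (hB : ∀ b ∈ B, b < w.length) (hc : MaxInsertion w B m p B') :
    p ≤ w.length := by
  rcases hc with ⟨hp, -⟩ | ⟨hp | hp, -⟩ | ⟨hp | hp, -⟩ | ⟨-, hp, -⟩ <;>
    first | exact (hB p hp).le | exact hp.le

lemma shiftIdx_mem (hc : MaxInsertion w B m p B') {k : ℕ} (hk : k ∈ B) (hkp : k ≠ p) :
    shiftIdx p k ∈ B' := by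
  have hlt : (if p < k then k + 1 else k) = shiftIdx p k := by
    unfold shiftIdx; split_ifs <;> omega
  have hle : (if p ≤ k then k + 1 else k) = shiftIdx p k := by
    unfold shiftIdx; split_ifs <;> omega
  rcases hc with ⟨-, rfl⟩ | ⟨-, -, rfl⟩ | ⟨-, rfl⟩ | ⟨-, -, -, rfl⟩
  · exact Finset.mem_image.2 ⟨k, hk, hlt⟩
  · exact Finset.mem_image.2 ⟨k, hk, hle⟩
  · exact Finset.mem_insert_of_mem (Finset.mem_image.2 ⟨k, hk, hle⟩)
  · exact Finset.mem_image.2 ⟨k, Finset.mem_erase.2 ⟨hkp, hk⟩, hle⟩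

lemma mem_or_add_one_mem_or_lt (hc : MaxInsertion w B m p B') (hp : p < w.length) :
    p ∈ B' ∨ p + 1 ∈ B' ∨ ∀ x ∈ w, x < m := by
  rcases hc with ⟨hpB, rfl⟩ | ⟨hpB, -, rfl⟩ | ⟨-, rfl⟩ | ⟨hlt, -⟩
  · exact Or.inl (Finset.mem_image.2 ⟨p, hpB, if_neg (lt_irrefl p)⟩)
  · exact Or.inr (Or.inl (Finset.mem_image.2 ⟨p, hpB.resolve_right hp.ne, if_pos le_rfl⟩))
  · exact Or.inl (Finset.mem_insert_self p _)
  · exact Or.inr (Or.inr hlt)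

end MaxInsertion

lemma IsSSW.getD_lt_of_insertIdx {w : List ℕ} {B' : Finset ℕ} {m p : ℕ}
    (hres : IsSSW (w.insertIdx p m) B') (hm : ∀ x ∈ w, x ≤ m) (hp : p < w.length)
    (hB' : p + 1 ∉ B') : w.getD p 0 < m := by
  have hsep := hres.2.2.2 p (by rw [List.length_insertIdx_of_le_length hp.le]; omega) hB'
  rw [List.getD_insertIdx_self hp.le, ← shiftIdx_of_le le_rfl,
    List.getD_insertIdx_shiftIdx] at hsep
  exact (hm _ (List.getD_mem hp 0)).lt_of_ne hsep.symm

theorem Sminversion.insertIdx_shiftIdx {w : List ℕ} {B B' : Finset ℕ} {m p i j : ℕ}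
    (hp : p ≤ w.length) (hm : ∀ x ∈ w, x ≤ m)
    (hB : ∀ k ∈ B, k ≠ p → shiftIdx p k ∈ B')
    (hgap : p < w.length → p ∈ B' ∨ p + 1 ∈ B' ∨ ∀ x ∈ w, x < m)
    (hres : IsSSW (w.insertIdx p m) B') (hs : Sminversion w B i j) :
    Sminversion (w.insertIdx p m) B' (shiftIdx p i) (shiftIdx p j) := by
  obtain ⟨hij, hj, hval, hD⟩ := hs
  have hget (k : ℕ) := List.getD_insertIdx_shiftIdx w m p k 0
  have hself : (w.insertIdx p m).getD p 0 = m := List.getD_insertIdx_self hp m 0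
  have hlen : (w.insertIdx p m).length = w.length + 1 := List.length_insertIdx_of_le_length hp m
  have hwi : w.getD i 0 ≤ m := hm _ (List.getD_mem (hij.trans hj) 0)
  refine ⟨shiftIdx_strictMono p hij, by linarith [shiftIdx_le p j], by rwa [hget, hget], ?_⟩
  rw [hget]
  obtain rfl | hjp := eq_or_ne j p
  · rw [shiftIdx_of_le le_rfl, Nat.add_sub_cancel, hself]
    rcases hwi.lt_or_eq with hlt | heq
    · exact Or.inr (Or.inl hlt)
    rcases hgap hj with hpB | hpB | hlt
    · exact Or.inr (Or.inr (Or.inl ⟨by rw [shiftIdx_of_lt hij]; omega, heq.symm, hpB⟩))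
    · exact Or.inl hpB
    · exact absurd heq (hlt _ (List.getD_mem (hij.trans hj) 0)).ne
  rw [shiftIdx_sub_one hjp, hget]
  rcases hD with hjB | hlt | ⟨hij1, heq, hB1⟩ | ⟨hij1, h2j, hdesc, heq⟩
  · exact Or.inl (hB j hjB hjp)
  · exact Or.inr (Or.inl hlt)
  · have hne : shiftIdx p i + 1 ≠ shiftIdx p j := mt add_one_eq_of_shiftIdx_add_one_eq hij1
    obtain rfl | hj1 := eq_or_ne j (p + 1)
    · rw [Nat.add_sub_cancel] at heq ⊢
      by_cases hB' : p + 1 ∈ B'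
      · exact Or.inr (Or.inr (Or.inl ⟨hne, heq, by rwa [shiftIdx_of_le le_rfl]⟩))
      rw [shiftIdx_add_one_sub_two, hself]
      exact Or.inr (Or.inr (Or.inr ⟨hne, (le_shiftIdx p (p + 1)).trans' (by omega),
        hres.getD_lt_of_insertIdx hm (by omega) hB', heq⟩))
    · exact Or.inr (Or.inr (Or.inl ⟨hne, heq, hB _ hB1 (by omega)⟩))
  · have hne : shiftIdx p i + 1 ≠ shiftIdx p j := mt add_one_eq_of_shiftIdx_add_one_eq hij1
    obtain rfl | hj1 := eq_or_ne j (p + 1)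
    · rw [shiftIdx_add_one_sub_two, hself]
      exact Or.inr (Or.inr (Or.inr
        ⟨hne, h2j.trans (le_shiftIdx _ _), hdesc.trans_le (hm _ (List.getD_mem (by omega) 0)), heq⟩))
    · rw [shiftIdx_sub_two hjp hj1, hget]
      exact Or.inr (Or.inr (Or.inr ⟨hne, h2j.trans (le_shiftIdx p j), hdesc, heq⟩))

/-- Inserting one occurrence of a maximal letter `m` into a segmented Smirnov
word `(w, B)` at position `p` — as a double fall (new first letter of the block
starting at `p`), a double rise (new last letter of the block ending at `p`),
a new singleton block at gap `p`, or (if `m` is strictly maximal) a peak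
replacing the block separator `p` — sends every sminversion of `w` to a
sminversion of the new word, under the index shift induced by the insertion. -/
theorem stmt8 (w : List ℕ) (B : Finset ℕ) (m p : ℕ) (B' : Finset ℕ)
    (h : IsSSW w B) (hm : ∀ x ∈ w, x ≤ m)
    (hcase :
      -- double fall: `p` starts a block, `m` becomes its new first letter
      (p ∈ B ∧ B' = B.image (fun x => if p < x then x + 1 else x)) ∨
      -- double rise: a block ends just before `p`, `m` becomes its last letter
      ((p ∈ B ∨ p = w.length) ∧ p ≠ 0 ∧
        B' = B.image (fun x => if p ≤ x then x + 1 else x)) ∨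
      -- singleton: a new block `[m]` is inserted in the gap at `p`
      ((p ∈ B ∨ p = w.length) ∧
        B' = insert p (B.image (fun x => if p ≤ x then x + 1 else x))) ∨
      -- peak: the block separator at `p` is replaced by `m` (needs `m` strict)
      ((∀ x ∈ w, x < m) ∧ p ∈ B ∧ p ≠ 0 ∧
        B' = (B.erase p).image (fun x => if p ≤ x then x + 1 else x)))
    (hres : IsSSW (w.insertIdx p m) B') :
    ∀ i j, Sminversion w B i j →
      Sminversion (w.insertIdx p m) B'
        (if i < p then i else i + 1) (if j < p then j else j + 1) := by
  intro i j hs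
  have hc : MaxInsertion w B m p B' := hcase
  exact Sminversion.insertIdx_shiftIdx (hc.le_length h.1) hm (fun _ => hc.shiftIdx_mem)
    hc.mem_or_add_one_mem_or_lt hres hs
end

section
/- A permutation σ of {1,...,n} (viewed as a segmented Smirnov word with a single block) has sminv(σ) = 0 if and only if σ avoids the pattern 231, i.e., there are no indices i < j < k with σ_k < σ_i < σ_j. -/
/-
For a word with distinct letters and a single block, the only applicable clause of a
sminversion `(i, j)` is `w_j < w_i < w_{j-1}`, which is a `231` occurrence at positions
`i < j - 1 < j`. Conversely, from an occurrence `w_k < w_i < w_j` at `i < j < k`, take the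
first position `b > j` with `w_b < w_i`: then `w_{b-1} > w_i`, so `(i, b)` is a sminversion.
-/

theorem List.Nodup.getD_ne_getD {w : List ℕ} (hnd : w.Nodup) {a b : ℕ}
    (ha : a < w.length) (hb : b < w.length) (hab : a ≠ b) : w.getD a 0 ≠ w.getD b 0 := by
  rw [List.getD_eq_getElem w 0 ha, List.getD_eq_getElem w 0 hb]
  exact fun h => hab ((List.Nodup.getElem_inj_iff hnd).mp h)

theorem sminv_eq_zero_iff (w : List ℕ) (B : Finset ℕ) :
    sminv w B = 0 ↔ ∀ i j, ¬ Sminversion w B i j := by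
  have hfin : {p : ℕ × ℕ | Sminversion w B p.1 p.2}.Finite := by
    refine ((Set.finite_Iio w.length).prod (Set.finite_Iio w.length)).subset ?_
    rintro ⟨i, j⟩ ⟨hij, hj, -⟩
    exact ⟨hij.trans hj, hj⟩
  rw [sminv, Set.ncard_eq_zero hfin, Set.eq_empty_iff_forall_notMem]
  exact ⟨fun h i j => h (i, j), fun h p => h p.1 p.2⟩

theorem sminversion_singleton_zero_iff {w : List ℕ} (hnd : w.Nodup) (i j : ℕ) :
    Sminversion w {0} i j ↔
      i < j ∧ j < w.length ∧ w.getD j 0 < w.getD i 0 ∧ w.getD i 0 < w.getD (j - 1) 0 := by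
  constructor
  · rintro ⟨hij, hj, hlt, hc⟩
    refine ⟨hij, hj, hlt, ?_⟩
    rcases hc with h | h | ⟨hne, heq, -⟩ | ⟨hne, -, -, heq⟩
    · rw [Finset.mem_singleton] at h; omega
    · exact h
    · exact absurd heq (hnd.getD_ne_getD (by omega) (by omega) (by omega))
    · exact absurd heq (hnd.getD_ne_getD (by omega) (by omega) (by omega))
  · rintro ⟨hij, hj, hlt, hg⟩
    exact ⟨hij, hj, hlt, Or.inr (Or.inl hg)⟩

theorem exists_sminversion_of_pattern231 {w : List ℕ} (hnd : w.Nodup) (B : Finset ℕ)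
    {i j k : ℕ} (hij : i < j) (hjk : j < k) (hk : k < w.length)
    (hwki : w.getD k 0 < w.getD i 0) (hwij : w.getD i 0 < w.getD j 0) :
    ∃ b, Sminversion w B i b := by
  classical
  have hex : ∃ b, j < b ∧ b < w.length ∧ w.getD b 0 < w.getD i 0 := ⟨k, hjk, hk, hwki⟩
  obtain ⟨hjb, hb, hwbi⟩ := Nat.find_spec hex
  set b := Nat.find hex
  have hprev : w.getD i 0 < w.getD (b - 1) 0 := by
    by_cases hbj : b - 1 = j
    · rwa [hbj]
    · have hge : w.getD i 0 ≤ w.getD (b - 1) 0 :=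
        not_lt.mp fun h => Nat.find_min hex (show b - 1 < b by omega) ⟨by omega, by omega, h⟩
      exact lt_of_le_of_ne hge (hnd.getD_ne_getD (by omega) (by omega) (by omega)).symm
  exact ⟨b, by omega, hb, hwbi, Or.inr (Or.inl hprev)⟩

theorem stmt12_general (n : ℕ) (w : List ℕ)
    (hperm : w.Perm ((List.range n).map (· + 1))) :
    sminv w {0} = 0 ↔
      ∀ i j k, i < j → j < k → k < w.length →
        ¬(w.getD k 0 < w.getD i 0 ∧ w.getD i 0 < w.getD j 0) := by
  have hnd : w.Nodup := hperm.nodup_iff.mpr (List.nodup_range.map (add_left_injective 1))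
  rw [sminv_eq_zero_iff]
  constructor
  · rintro h i j k hij hjk hk ⟨hwki, hwij⟩
    obtain ⟨b, hb⟩ := exists_sminversion_of_pattern231 hnd {0} hij hjk hk hwki hwij
    exact h i b hb
  · intro h i j hS
    obtain ⟨hij, hj, hwji, hprev⟩ := (sminversion_singleton_zero_iff hnd i j).mp hS
    have hne : i ≠ j - 1 := fun e => (e ▸ hprev).false
    exact h i (j - 1) j (by omega) (by omega) hj ⟨hwji, hprev⟩

/-- A permutation of `{1, …, n}`, viewed as a segmented Smirnov word with a
single block, has `sminv = 0` if and only if it avoids the pattern `231`,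
i.e. there are no indices `i < j < k` with `w_k < w_i < w_j`. -/
theorem stmt12 (n : ℕ) (hn : 0 < n) (w : List ℕ)
    (hperm : w.Perm ((List.range n).map (· + 1))) :
    sminv w {0} = 0 ↔
      ∀ i j k, i < j → j < k → k < w.length →
        ¬(w.getD k 0 < w.getD i 0 ∧ w.getD i 0 < w.getD j 0) :=
  stmt12_general n w hperm
end

section
/- Parallelogram polyominoes of size (n−k) × (k+1) with area 0, equipped with valid labellings, are in bijection with Smirnov words of length n with exactly k ascents, via reading the labels bottom to top, left to right. -/
/-- `(b, t)` encodes a parallelogram polyomino of width `m` and height `h`: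
column `i` (for `1 ≤ i ≤ m`) consists of the cells in rows `b i, …, t i`.
Bottoms and tops are weakly increasing, consecutive columns overlap in at
least one row (the bounding paths are strictly apart except at the
endpoints), the first column starts at row `1` and the last one ends at row
`h`. -/
def IsPPoly (m h : ℕ) (b t : ℕ → ℕ) : Prop :=
  0 < m ∧ 0 < h ∧
  (∀ i, 1 ≤ i → i ≤ m → 1 ≤ b i ∧ b i ≤ t i ∧ t i ≤ h) ∧
  b 1 = 1 ∧ t m = h ∧
  (∀ i, 1 ≤ i → i + 1 ≤ m → b i ≤ b (i + 1) ∧ t i ≤ t (i + 1) ∧ b (i + 1) ≤ t i) ∧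
  (∀ i, i = 0 ∨ m < i → b i = 0 ∧ t i = 0)

/-- The cell in column `i`, row `r` is a labelled cell: it has a north step of
the upper path as its left border (`t (i-1) < r ≤ t i`) or an east step of the
lower path as its bottom border (`r = b i`). -/
def IsLab (m : ℕ) (b t : ℕ → ℕ) (i r : ℕ) : Prop :=
  1 ≤ i ∧ i ≤ m ∧ b i ≤ r ∧ r ≤ t i ∧ (r = b i ∨ t (i - 1) < r)

instance (m : ℕ) (b t : ℕ → ℕ) (i r : ℕ) : Decidable (IsLab m b t i r) := by
  unfold IsLab; infer_instance

/-- `L` is a valid labelling: it is supported on the labelled cells, with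
positive labels, columns strictly increasing bottom to top and rows strictly
decreasing left to right. -/
def ValidLab (m : ℕ) (b t : ℕ → ℕ) (L : ℕ × ℕ → ℕ) : Prop :=
  (∀ i r, ¬IsLab m b t i r → L (i, r) = 0) ∧
  (∀ i r, IsLab m b t i r → 0 < L (i, r)) ∧
  (∀ i r r', IsLab m b t i r → IsLab m b t i r' → r < r' → L (i, r) < L (i, r')) ∧
  (∀ i i' r, IsLab m b t i r → IsLab m b t i' r → i < i' → L (i', r) < L (i, r))

/-- Read the labels bottom to top, left to right (column by column). -/
def readLabels (m h : ℕ) (b t : ℕ → ℕ) (L : ℕ × ℕ → ℕ) : List ℕ :=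
  ((List.range m).map (· + 1)).flatMap fun i =>
    (((List.range h).map (· + 1)).filter fun r => decide (IsLab m b t i r)).map
      fun r => L (i, r)

/-!
In a polyomino of area zero consecutive columns share exactly one row (`b (i + 1) = t i`).
Reading the labels column by column, every step inside a column is therefore an ascent and
every step to the next column is a strict descent, along the shared row. So the columns are
exactly the maximal increasing runs of the word (`List.splitBy (· < ·)`), and a polyomino with
`m` columns and `h` rows gives a Smirnov word with `m + h - 1` letters and `h - 1` ascents.
Conversely, the increasing runs of a Smirnov word are separated by strict descents, and stacking
them as columns, each one starting in the row where the previous one ends, is the inverse map.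
-/

open Finset in
def ascents (w : List ℕ) : ℕ := #{i ∈ range (w.length - 1) | w.getD i 0 < w.getD (i + 1) 0}

theorem ncard_setOf_ascent (w : List ℕ) :
    {i | i + 1 < w.length ∧ w.getD i 0 < w.getD (i + 1) 0}.ncard = ascents w := by
  rw [ascents, ← Set.ncard_coe_finset]
  congr 1
  ext i
  simp only [Finset.coe_filter, Finset.mem_range, Set.mem_ofPred_eq]
  omega

@[simp] theorem ascents_nil : ascents [] = 0 := rfl

@[simp] theorem ascents_singleton (a : ℕ) : ascents [a] = 0 := rfl

theorem ascents_cons_cons (a b : ℕ) (l : List ℕ) :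
    ascents (a :: b :: l) = (if a < b then 1 else 0) + ascents (b :: l) := by
  simp only [ascents, Finset.card_filter, List.length_cons, Nat.add_sub_cancel]
  rw [Finset.sum_range_succ', add_comm]
  rfl

theorem ascents_append {u v : List ℕ} (h : ∀ x ∈ u.getLast?, ∀ y ∈ v.head?, ¬x < y) :
    ascents (u ++ v) = ascents u + ascents v := by
  induction u with
  | nil => simp
  | cons a u ih =>
    rcases u with _ | ⟨c, u⟩
    · rcases v with _ | ⟨d, v⟩
      · simp
      · simp_all [ascents_cons_cons]
    · simp_all [ascents_cons_cons, add_assoc]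

theorem ascents_add_one_of_isChain_lt {w : List ℕ} (hw : w ≠ []) (h : w.IsChain (· < ·)) :
    ascents w + 1 = w.length := by
  induction w with
  | nil => contradiction
  | cons a w ih =>
    rcases w with _ | ⟨b, w⟩
    · simp
    · rw [List.isChain_cons_cons] at h
      simp [ascents_cons_cons, h.1, ← ih (List.cons_ne_nil b w) h.2, add_comm]

theorem isChain_iff_getD {α : Type*} {R : α → α → Prop} (w : List α) (d : α) :
    w.IsChain R ↔ ∀ i, i + 1 < w.length → R (w.getD i d) (w.getD (i + 1) d) := by
  rw [List.isChain_iff_getElem]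
  refine forall_congr' fun i => forall_congr' fun hi => ?_
  rw [List.getD_eq_getElem _ _ (by omega), List.getD_eq_getElem _ _ hi]

def IsRunDecomposition (rs : List (List ℕ)) : Prop :=
  [] ∉ rs ∧ (∀ c ∈ rs, c.IsChain (· < ·)) ∧
    rs.IsChain fun u v => ∀ x ∈ u.getLast?, ∀ y ∈ v.head?, y < x

namespace IsRunDecomposition

variable {rs : List (List ℕ)}

theorem isChain_ne_flatten (h : IsRunDecomposition rs) : rs.flatten.IsChain (· ≠ ·) :=
  (List.isChain_flatten h.1).2
    ⟨fun c hc => (h.2.1 c hc).imp fun _ _ => ne_of_lt,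
      h.2.2.imp fun _ _ H x hx y hy => (H x hx y hy).ne'⟩

theorem splitBy_flatten (h : IsRunDecomposition rs) : rs.flatten.splitBy (· < ·) = rs := by
  refine List.splitBy_flatten h.1 (by simpa using h.2.1) (h.2.2.imp_of_mem_imp ?_)
  intro u v hu hv H
  have hu' : u ≠ [] := by rintro rfl; exact h.1 hu
  have hv' : v ≠ [] := by rintro rfl; exact h.1 hv
  refine ⟨hu', hv', decide_eq_false (not_lt.2 ?_)⟩
  exact (H _ (List.getLast_mem_getLast? hu') _ (List.head_mem_head? hv')).le

theorem ascents_flatten_add_length (h : IsRunDecomposition rs) :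
    ascents rs.flatten + rs.length = rs.flatten.length := by
  induction rs with
  | nil => simp
  | cons c rs ih =>
    have hc : c ≠ [] := by rintro rfl; exact h.1 List.mem_cons_self
    have hrs : IsRunDecomposition rs :=
      ⟨fun hm => h.1 (List.mem_cons_of_mem c hm), fun d hd => h.2.1 d (List.mem_cons_of_mem c hd),
        h.2.2.tail⟩
    have hjoin : ∀ x ∈ c.getLast?, ∀ y ∈ rs.flatten.head?, ¬x < y := by
      rcases rs with _ | ⟨d, rs⟩
      · simp
      · have hd : d ≠ [] := by rintro rfl; exact hrs.1 List.mem_cons_self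
        intro x hx y hy
        rw [List.flatten_cons, List.head?_append_of_ne_nil _ hd] at hy
        exact not_lt.2 ((List.isChain_cons_cons.1 h.2.2).1 x hx y hy).le
    rw [List.flatten_cons, ascents_append hjoin, List.length_append, List.length_cons,
      ← ascents_add_one_of_isChain_lt hc (h.2.1 c List.mem_cons_self), ← ih hrs]
    ring

end IsRunDecomposition

theorem isRunDecomposition_splitBy {w : List ℕ} (hw : w.IsChain (· ≠ ·)) :
    IsRunDecomposition (w.splitBy (· < ·)) := by
  have hnil := List.nil_notMem_splitBy (fun a b => decide (a < b)) w
  refine ⟨hnil, fun c hc => by simpa using List.isChain_of_mem_splitBy hc, ?_⟩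
  have hsplit := List.isChain_iff_getElem.1
    (List.isChain_getLast_head_splitBy (fun a b => decide (a < b)) w)
  have hne := List.isChain_iff_getElem.1
    ((List.isChain_flatten hnil).1 (by rwa [List.flatten_splitBy])).2
  refine List.isChain_iff_getElem.2 fun i hi x hx y hy => ?_
  obtain ⟨hu, hv, hnlt⟩ := hsplit i hi
  rw [List.getLast?_eq_some_getLast hu, Option.mem_some_iff] at hx
  rw [List.head?_eq_some_head hv, Option.mem_some_iff] at hy
  subst hx hy
  have := hne i hi _ (List.getLast_mem_getLast? hu) _ (List.head_mem_head? hv)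
  simp only [decide_eq_false_iff_not, not_lt] at hnlt
  omega

/-- Area zero: every cell of the polyomino is labelled. -/
def AllCellsLabelled (m : ℕ) (b t : ℕ → ℕ) : Prop :=
  ∀ i r, 1 ≤ i → i ≤ m → b i ≤ r → r ≤ t i → IsLab m b t i r

def column (b t : ℕ → ℕ) (L : ℕ × ℕ → ℕ) (i : ℕ) : List ℕ :=
  (List.range' (b i) (t i + 1 - b i)).map fun r => L (i, r)

def columns (m : ℕ) (b t : ℕ → ℕ) (L : ℕ × ℕ → ℕ) : List (List ℕ) :=
  (List.range' 1 m).map (column b t L)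

theorem map_add_one_range (n : ℕ) : (List.range n).map (· + 1) = List.range' 1 n := by
  rw [List.range'_eq_map_range]
  exact List.map_congr_left fun r _ => add_comm r 1

section Columns

variable {m h : ℕ} {b t : ℕ → ℕ} {L : ℕ × ℕ → ℕ}

@[simp] theorem length_column (i : ℕ) : (column b t L i).length = t i + 1 - b i := by
  simp [column]

@[simp] theorem length_columns : (columns m b t L).length = m := by
  simp [columns]

theorem getElem_column {i d : ℕ} (hd : d < (column b t L i).length) :
    (column b t L i)[d] = L (i, b i + d) := by
  simp [column]

theorem head?_column {i : ℕ} (hi : b i ≤ t i) : (column b t L i).head? = some (L (i, b i)) := by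
  rw [column, List.head?_map, List.head?_range', if_neg (by omega)]
  rfl

theorem getLast?_column {i : ℕ} (hi : b i ≤ t i) :
    (column b t L i).getLast? = some (L (i, t i)) := by
  simp only [column, List.getLast?_map, List.getLast?_range', Option.map_eq_some_iff]
  exact ⟨_, by rw [if_neg (by omega)], by congr 2; omega⟩

theorem IsPPoly.bottom_le_top (hP : IsPPoly m h b t) {i : ℕ} (hi : 1 ≤ i) (him : i ≤ m) :
    b i ≤ t i :=
  (hP.2.2.1 i hi him).2.1

theorem IsPPoly.bottom_succ_eq_top (hP : IsPPoly m h b t) (hA : AllCellsLabelled m b t) {i : ℕ}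
    (hi : 1 ≤ i) (him : i + 1 ≤ m) : b (i + 1) = t i := by
  obtain ⟨-, hti, hbt⟩ := hP.2.2.2.2.2.1 i hi him
  have := (hA (i + 1) (t i) (by omega) him hbt hti).2.2.2.2
  simpa [eq_comm] using this

theorem filter_isLab_eq_range' (hP : IsPPoly m h b t) (hA : AllCellsLabelled m b t)
    {i : ℕ} (hi : 1 ≤ i) (him : i ≤ m) :
    ((List.range h).map (· + 1)).filter (fun r => decide (IsLab m b t i r)) =
      List.range' (b i) (t i + 1 - b i) := by
  obtain ⟨hb, hbt, ht⟩ := hP.2.2.1 i hi him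
  rw [map_add_one_range]
  refine ((List.pairwise_lt_range' 1).filter _).eq_of_mem_iff (List.pairwise_lt_range' 1)
    fun r => ?_
  have hlab : IsLab m b t i r ↔ b i ≤ r ∧ r ≤ t i :=
    ⟨fun hl => ⟨hl.2.2.1, hl.2.2.2.1⟩, fun hr => hA i r hi him hr.1 hr.2⟩
  simp only [List.mem_filter, List.mem_range'_1, decide_eq_true_eq, hlab]
  omega

theorem readLabels_eq_flatten_columns (hP : IsPPoly m h b t) (hA : AllCellsLabelled m b t) :
    readLabels m h b t L = (columns m b t L).flatten := by
  rw [readLabels, List.flatMap_def, columns, map_add_one_range m]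
  congr 1
  refine List.map_congr_left fun i hi => ?_
  rw [List.mem_range'_1] at hi
  rw [filter_isLab_eq_range' hP hA (by omega) (by omega)]
  rfl

theorem pos_of_mem_flatten_columns (hA : AllCellsLabelled m b t) (hV : ValidLab m b t L) :
    ∀ x ∈ (columns m b t L).flatten, 0 < x := by
  intro x hx
  obtain ⟨_, hc, hx⟩ := List.mem_flatten.1 hx
  obtain ⟨i, hi, rfl⟩ := List.mem_map.1 hc
  obtain ⟨r, hr, rfl⟩ := List.mem_map.1 hx
  rw [List.mem_range'_1] at hi hr
  exact hV.2.1 i r (hA i r hi.1 (by omega) hr.1 (by omega))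

theorem column_ne_nil {i : ℕ} (hi : b i ≤ t i) : column b t L i ≠ [] := by
  rw [← List.length_pos_iff, length_column]
  omega

theorem isChain_column (hA : AllCellsLabelled m b t) (hV : ValidLab m b t L) {i : ℕ}
    (hi : 1 ≤ i) (him : i ≤ m) : (column b t L i).IsChain (· < ·) := by
  refine (List.pairwise_map.2 ((List.pairwise_lt_range' 1).imp_of_mem ?_)).isChain
  intro r r' hr hr' hlt
  rw [List.mem_range'_1] at hr hr'
  exact hV.2.2.1 i r r' (hA i r hi him hr.1 (by omega)) (hA i r' hi him hr'.1 (by omega)) hlt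

theorem head_column_succ_lt_getLast_column (hP : IsPPoly m h b t) (hA : AllCellsLabelled m b t)
    (hV : ValidLab m b t L) {i : ℕ} (hi : 1 ≤ i) (him : i + 1 ≤ m) :
    ∀ x ∈ (column b t L i).getLast?, ∀ y ∈ (column b t L (i + 1)).head?, y < x := by
  have hbt := hP.bottom_le_top hi (by omega)
  have hbt' := hP.bottom_le_top (i := i + 1) (by omega) him
  have hb := hP.bottom_succ_eq_top hA hi him
  simp only [getLast?_column hbt, head?_column hbt', hb, Option.mem_some_iff]
  rintro _ rfl _ rfl
  exact hV.2.2.2 i (i + 1) (t i) (hA i (t i) hi (by omega) hbt le_rfl)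
    (hA (i + 1) (t i) (by omega) him hb.le (hb ▸ hbt')) (by omega)

theorem isRunDecomposition_columns (hP : IsPPoly m h b t) (hA : AllCellsLabelled m b t)
    (hV : ValidLab m b t L) : IsRunDecomposition (columns m b t L) := by
  refine ⟨?_, ?_, ?_⟩
  · simp only [columns, List.mem_map, List.mem_range'_1, not_exists, not_and]
    exact fun i hi => column_ne_nil (hP.bottom_le_top hi.1 (by omega))
  · simp only [columns, List.forall_mem_map, List.mem_range'_1]
    exact fun i hi => isChain_column hA hV hi.1 (by omega)
  · rw [columns, List.isChain_map, List.isChain_iff_getElem]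
    intro j hj
    simp only [List.length_range'] at hj
    simp only [List.getElem_range', one_mul, ← add_assoc]
    exact head_column_succ_lt_getLast_column hP hA hV (by omega) (by omega)

theorem length_flatten_columns (hP : IsPPoly m h b t) (hA : AllCellsLabelled m b t) :
    (columns m b t L).flatten.length + 1 = m + h := by
  have hprefix : ∀ j, 1 ≤ j → j ≤ m → (columns j b t L).flatten.length + 1 = t j + j := by
    intro j hj
    induction j, hj using Nat.le_induction with
    | base =>
      intro hm
      have := hP.bottom_le_top le_rfl hm
      simp [columns, hP.2.2.2.1]
    | succ j hj ih =>
      intro hjm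
      have := hP.bottom_le_top (by omega) hjm
      have := hP.bottom_succ_eq_top hA hj hjm
      have := ih (by omega)
      rw [columns] at this ⊢
      rw [List.range'_concat, one_mul, add_comm 1 j, List.map_append, List.map_singleton,
        List.flatten_append, List.flatten_singleton, List.length_append, length_column]
      omega
  have := hprefix m hP.1 le_rfl
  rw [hP.2.2.2.2.1] at this
  omega

theorem IsPPoly.eq_of_length_column_eq {h' : ℕ} {b' t' : ℕ → ℕ} (hP : IsPPoly m h b t)
    (hA : AllCellsLabelled m b t) (hP' : IsPPoly m h' b' t') (hA' : AllCellsLabelled m b' t')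
    (hlen : ∀ i, 1 ≤ i → i ≤ m → t i + 1 - b i = t' i + 1 - b' i) :
    b = b' ∧ t = t' := by
  have hin : ∀ i, 1 ≤ i → i ≤ m → b i = b' i ∧ t i = t' i := by
    intro i hi
    induction i, hi using Nat.le_induction with
    | base =>
      intro hm
      have := hlen 1 le_rfl hm
      have := hP.bottom_le_top le_rfl hm
      have := hP'.bottom_le_top le_rfl hm
      have := hP.2.2.2.1
      have := hP'.2.2.2.1
      omega
    | succ i hi ih =>
      intro him
      have := ih (by omega)
      have := hlen (i + 1) (by omega) him
      have := hP.bottom_le_top (by omega) him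
      have := hP'.bottom_le_top (by omega) him
      have := hP.bottom_succ_eq_top hA hi him
      have := hP'.bottom_succ_eq_top hA' hi him
      omega
  have hall : ∀ i, b i = b' i ∧ t i = t' i := by
    intro i
    by_cases hi : 1 ≤ i ∧ i ≤ m
    · exact hin i hi.1 hi.2
    · have := hP.2.2.2.2.2.2 i (by omega)
      have := hP'.2.2.2.2.2.2 i (by omega)
      omega
  exact ⟨funext fun i => (hall i).1, funext fun i => (hall i).2⟩

theorem ValidLab.eq_of_columns_eq {L' : ℕ × ℕ → ℕ} (hV : ValidLab m b t L)
    (hV' : ValidLab m b t L') (hcol : columns m b t L = columns m b t L') : L = L' := by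
  funext ⟨i, r⟩
  by_cases hl : IsLab m b t i r
  · obtain ⟨h1, h2, hbr, hrt, -⟩ := hl
    have hcolI := List.map_inj_left.1 hcol i (List.mem_range'_1.2 ⟨h1, by omega⟩)
    have hlt : r - b i < (column b t L i).length := by simp; omega
    have := List.getElem_of_eq hcolI hlt
    rwa [getElem_column, getElem_column, Nat.add_sub_cancel' hbr] at this
  · rw [hV.1 i r hl, hV'.1 i r hl]

theorem eq_of_readLabels_eq {b' t' : ℕ → ℕ} {L' : ℕ × ℕ → ℕ} (hP : IsPPoly m h b t)
    (hA : AllCellsLabelled m b t) (hV : ValidLab m b t L) (hP' : IsPPoly m h b' t')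
    (hA' : AllCellsLabelled m b' t') (hV' : ValidLab m b' t' L')
    (heq : readLabels m h b t L = readLabels m h b' t' L') : b = b' ∧ t = t' ∧ L = L' := by
  have hcol : columns m b t L = columns m b' t' L' := by
    rw [← (isRunDecomposition_columns hP hA hV).splitBy_flatten,
      ← (isRunDecomposition_columns hP' hA' hV').splitBy_flatten,
      ← readLabels_eq_flatten_columns hP hA, ← readLabels_eq_flatten_columns hP' hA', heq]
  obtain ⟨rfl, rfl⟩ := hP.eq_of_length_column_eq hA hP' hA' fun i h1 h2 => by
    simpa using congrArg List.length
      (List.map_inj_left.1 hcol i (List.mem_range'_1.2 ⟨h1, by omega⟩))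
  exact ⟨rfl, rfl, hV.eq_of_columns_eq hV' hcol⟩

theorem length_readLabels (hP : IsPPoly m h b t) (hA : AllCellsLabelled m b t) :
    (readLabels m h b t L).length + 1 = m + h := by
  rw [readLabels_eq_flatten_columns hP hA, length_flatten_columns hP hA]

theorem ascents_readLabels_add (hP : IsPPoly m h b t) (hA : AllCellsLabelled m b t)
    (hV : ValidLab m b t L) :
    ascents (readLabels m h b t L) + m = (readLabels m h b t L).length := by
  simpa [readLabels_eq_flatten_columns hP hA] using
    (isRunDecomposition_columns hP hA hV).ascents_flatten_add_length

theorem isChain_ne_readLabels (hP : IsPPoly m h b t) (hA : AllCellsLabelled m b t)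
    (hV : ValidLab m b t L) : (readLabels m h b t L).IsChain (· ≠ ·) := by
  rw [readLabels_eq_flatten_columns hP hA]
  exact (isRunDecomposition_columns hP hA hV).isChain_ne_flatten

theorem pos_of_mem_readLabels (hP : IsPPoly m h b t) (hA : AllCellsLabelled m b t)
    (hV : ValidLab m b t L) : ∀ x ∈ readLabels m h b t L, 0 < x := by
  rw [readLabels_eq_flatten_columns hP hA]
  exact pos_of_mem_flatten_columns hA hV

end Columns

theorem IsRunDecomposition.head_lt_getLast {rs : List (List ℕ)} (h : IsRunDecomposition rs)
    {j : ℕ} (hj : j + 1 < rs.length) :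
    (rs.getD (j + 1) []).getD 0 0 < (rs.getD j []).getD ((rs.getD j []).length - 1) 0 := by
  have hu : rs[j] ≠ [] := fun e => h.1 (e ▸ List.getElem_mem _)
  have hv : rs[j + 1] ≠ [] := fun e => h.1 (e ▸ List.getElem_mem _)
  have := List.isChain_iff_getElem.1 h.2.2 j hj _ (List.getLast_mem_getLast? hu) _
    (List.head_mem_head? hv)
  rw [List.getLast_eq_getElem, List.head_eq_getElem] at this
  rwa [List.getD_eq_getElem rs [] hj, List.getD_eq_getElem rs [] (Nat.lt_of_succ_lt hj),
    List.getD_eq_getElem _ _ (List.length_pos_iff.2 hv),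
    List.getD_eq_getElem _ _ (Nat.sub_lt (List.length_pos_iff.2 hu) one_pos)]

section OfRuns

variable (rs : List (List ℕ))

/-- The row shared by columns `i` and `i + 1` of the staircase whose columns are the runs `rs`. -/
def runsRow (i : ℕ) : ℕ := 1 + ∑ j ∈ Finset.range i, ((rs.getD j []).length - 1)

def runsBottom (i : ℕ) : ℕ := if 1 ≤ i ∧ i ≤ rs.length then runsRow rs (i - 1) else 0

def runsTop (i : ℕ) : ℕ := if 1 ≤ i ∧ i ≤ rs.length then runsRow rs i else 0

def runsLabel (p : ℕ × ℕ) : ℕ :=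
  if IsLab rs.length (runsBottom rs) (runsTop rs) p.1 p.2 then
    (rs.getD (p.1 - 1) []).getD (p.2 - runsRow rs (p.1 - 1)) 0
  else 0

variable {rs}

theorem runsRow_succ (i : ℕ) :
    runsRow rs (i + 1) = runsRow rs i + ((rs.getD i []).length - 1) := by
  rw [runsRow, runsRow, Finset.sum_range_succ, add_assoc]

theorem runsRow_mono : Monotone (runsRow rs) :=
  monotone_nat_of_le_succ fun i => by rw [runsRow_succ]; omega

theorem one_le_runsRow (i : ℕ) : 1 ≤ runsRow rs i := by
  rw [runsRow]; omega

theorem length_getD_pos (hrs : [] ∉ rs) {j : ℕ} (hj : j < rs.length) :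
    0 < (rs.getD j []).length := by
  rw [List.getD_eq_getElem _ _ hj, List.length_pos_iff]
  exact fun e => hrs (e ▸ List.getElem_mem _)

theorem runsRow_length_add_length (hrs : [] ∉ rs) :
    runsRow rs rs.length + rs.length = rs.flatten.length + 1 := by
  induction rs with
  | nil => simp [runsRow]
  | cons c rs ih =>
    have hih := ih fun h => hrs (List.mem_cons_of_mem c h)
    have hc : 0 < c.length := List.length_pos_iff.2 fun e => hrs (e ▸ List.mem_cons_self)
    unfold runsRow at hih ⊢
    rw [List.length_cons, Finset.sum_range_succ']
    simp only [List.getD_cons_succ, List.getD_cons_zero, List.flatten_cons, List.length_append]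
    omega

theorem runsBottom_eq {i : ℕ} (h1 : 1 ≤ i) (h2 : i ≤ rs.length) :
    runsBottom rs i = runsRow rs (i - 1) :=
  if_pos ⟨h1, h2⟩

theorem runsTop_eq {i : ℕ} (h1 : 1 ≤ i) (h2 : i ≤ rs.length) : runsTop rs i = runsRow rs i :=
  if_pos ⟨h1, h2⟩

theorem runsTop_le_runsRow (i : ℕ) : runsTop rs i ≤ runsRow rs i := by
  unfold runsTop
  split_ifs <;> omega

theorem isPPoly_runs (hrs : rs ≠ []) :
    IsPPoly rs.length (runsRow rs rs.length) (runsBottom rs) (runsTop rs) := by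
  have hm := List.length_pos_iff.2 hrs
  refine ⟨hm, one_le_runsRow _, fun i h1 h2 => ?_, ?_, runsTop_eq hm le_rfl, fun i h1 h2 => ?_,
    fun i hi => ?_⟩
  · rw [runsBottom_eq h1 h2, runsTop_eq h1 h2]
    exact ⟨one_le_runsRow _, runsRow_mono (by omega), runsRow_mono h2⟩
  · rw [runsBottom_eq le_rfl hm]
    simp [runsRow]
  · rw [runsBottom_eq h1 (by omega), runsTop_eq h1 (by omega), runsBottom_eq (by omega) h2,
      runsTop_eq (by omega) h2, Nat.add_sub_cancel]
    exact ⟨runsRow_mono (by omega), runsRow_mono (by omega), le_rfl⟩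
  · simp only [runsBottom, runsTop]
    constructor <;> rw [if_neg (by omega)]

theorem allCellsLabelled_runs : AllCellsLabelled rs.length (runsBottom rs) (runsTop rs) := by
  intro i r h1 h2 hbr hrt
  refine ⟨h1, h2, hbr, hrt, ?_⟩
  rw [runsBottom_eq h1 h2] at hbr ⊢
  have := runsTop_le_runsRow (rs := rs) (i - 1)
  omega

theorem isLab_runs_iff {i r : ℕ} :
    IsLab rs.length (runsBottom rs) (runsTop rs) i r ↔
      1 ≤ i ∧ i ≤ rs.length ∧ runsRow rs (i - 1) ≤ r ∧ r ≤ runsRow rs i := by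
  constructor
  · rintro ⟨h1, h2, hb, ht, -⟩
    rw [runsBottom_eq h1 h2] at hb
    rw [runsTop_eq h1 h2] at ht
    exact ⟨h1, h2, hb, ht⟩
  · rintro ⟨h1, h2, hb, ht⟩
    exact allCellsLabelled_runs i r h1 h2 (by rwa [runsBottom_eq h1 h2])
      (by rwa [runsTop_eq h1 h2])

theorem runsRow_sub_runsRow_pred (hrs : [] ∉ rs) {i : ℕ} (h1 : 1 ≤ i) (h2 : i ≤ rs.length) :
    runsRow rs i + 1 - runsRow rs (i - 1) = (rs.getD (i - 1) []).length := by
  obtain ⟨j, rfl⟩ : ∃ j, i = j + 1 := ⟨i - 1, by omega⟩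
  have := length_getD_pos hrs (j := j) (by omega)
  rw [runsRow_succ, Nat.add_sub_cancel]
  omega

theorem columns_runs (hrs : [] ∉ rs) :
    columns rs.length (runsBottom rs) (runsTop rs) (runsLabel rs) = rs := by
  refine List.ext_getElem (by simp [columns]) fun j hj hj' => ?_
  simp only [columns, List.getElem_map, List.getElem_range', one_mul]
  have hlen : (column (runsBottom rs) (runsTop rs) (runsLabel rs) (1 + j)).length =
      rs[j].length := by
    rw [length_column, runsBottom_eq (by omega) (by omega), runsTop_eq (by omega) (by omega),
      runsRow_sub_runsRow_pred hrs (by omega) (by omega), add_tsub_cancel_left,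
      List.getD_eq_getElem _ _ hj']
  refine List.ext_getElem hlen fun d hd hd' => ?_
  have hrow := runsRow_sub_runsRow_pred hrs (i := 1 + j) (by omega) (by omega)
  rw [add_tsub_cancel_left, List.getD_eq_getElem _ _ hj'] at hrow
  rw [getElem_column, runsLabel, if_pos (isLab_runs_iff.2 ⟨by omega, by omega, ?_⟩)]
  · simp only [runsBottom_eq (rs := rs) (i := 1 + j) (by omega) (by omega),
      add_tsub_cancel_left, List.getD_eq_getElem _ _ hj', List.getD_eq_getElem _ _ hd']
  · dsimp only
    rw [runsBottom_eq (by omega) (by omega), add_tsub_cancel_left]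
    omega

theorem runsLabel_of_isLab {i r : ℕ} (hl : IsLab rs.length (runsBottom rs) (runsTop rs) i r) :
    runsLabel rs (i, r) = (rs.getD (i - 1) []).getD (r - runsRow rs (i - 1)) 0 :=
  if_pos hl

theorem runsLabel_succ_lt (h : IsRunDecomposition rs) {i r : ℕ}
    (hl : IsLab rs.length (runsBottom rs) (runsTop rs) i r)
    (hl' : IsLab rs.length (runsBottom rs) (runsTop rs) (i + 1) r) :
    runsLabel rs (i + 1, r) < runsLabel rs (i, r) := by
  obtain ⟨h1, -, -, hr⟩ := isLab_runs_iff.1 hl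
  obtain ⟨-, h2, hr', -⟩ := isLab_runs_iff.1 hl'
  rw [Nat.add_sub_cancel] at hr'
  have hrow := runsRow_sub_runsRow_pred h.1 h1 (by omega)
  have hmono := runsRow_mono (rs := rs) (Nat.sub_le i 1)
  have hdesc := h.head_lt_getLast (j := i - 1) (by omega)
  rw [Nat.sub_add_cancel h1] at hdesc
  rw [runsLabel_of_isLab hl, runsLabel_of_isLab hl', Nat.add_sub_cancel,
    show r - runsRow rs i = 0 by omega,
    show r - runsRow rs (i - 1) = (rs.getD (i - 1) []).length - 1 by omega]
  exact hdesc

theorem validLab_runs (h : IsRunDecomposition rs) (hpos : ∀ x ∈ rs.flatten, 0 < x) :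
    ValidLab rs.length (runsBottom rs) (runsTop rs) (runsLabel rs) := by
  refine ⟨fun i r hl => if_neg hl, fun i r hl => ?_, fun i r r' hl hl' hlt => ?_,
    fun i i' r hl hl' hlt => ?_⟩
  · obtain ⟨h1, h2, hr⟩ := isLab_runs_iff.1 hl
    have hrow := runsRow_sub_runsRow_pred h.1 h1 h2
    have hi : i - 1 < rs.length := by omega
    rw [List.getD_eq_getElem _ _ hi] at hrow
    rw [runsLabel_of_isLab hl, List.getD_eq_getElem _ _ hi, List.getD_eq_getElem _ _ (by omega)]
    exact hpos _ (List.mem_flatten.2 ⟨_, List.getElem_mem _, List.getElem_mem _⟩)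
  · obtain ⟨h1, h2, hr⟩ := isLab_runs_iff.1 hl
    obtain ⟨-, -, hr'⟩ := isLab_runs_iff.1 hl'
    have hrow := runsRow_sub_runsRow_pred h.1 h1 h2
    have hi : i - 1 < rs.length := by omega
    rw [List.getD_eq_getElem _ _ hi] at hrow
    rw [runsLabel_of_isLab hl, runsLabel_of_isLab hl', List.getD_eq_getElem _ _ hi,
      List.getD_eq_getElem _ _ (by omega), List.getD_eq_getElem _ _ (by omega)]
    exact List.pairwise_iff_getElem.1
      (List.isChain_iff_pairwise.1 (h.2.1 _ (List.getElem_mem _))) _ _ _ _ (by omega)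
  · obtain ⟨-, -, -, hr⟩ := isLab_runs_iff.1 hl
    induction i', (hlt : i + 1 ≤ i') using Nat.le_induction with
    | base => exact runsLabel_succ_lt h hl hl'
    | succ i' hi' ih =>
      obtain ⟨-, h2, hr'⟩ := isLab_runs_iff.1 hl'
      rw [Nat.add_sub_cancel] at hr'
      have hmid : IsLab rs.length (runsBottom rs) (runsTop rs) i' r :=
        isLab_runs_iff.2 ⟨by omega, by omega, (runsRow_mono (by omega)).trans hr'.1,
          hr.trans (runsRow_mono (by omega))⟩
      exact (runsLabel_succ_lt h hmid hl').trans (ih hmid)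

theorem exists_readLabels_eq {w : List ℕ} (hw : w.IsChain (· ≠ ·)) (hpos : ∀ x ∈ w, 0 < x)
    (hne : w ≠ []) :
    ∃ b t L, IsPPoly (w.length - ascents w) (ascents w + 1) b t ∧
      AllCellsLabelled (w.length - ascents w) b t ∧ ValidLab (w.length - ascents w) b t L ∧
      readLabels (w.length - ascents w) (ascents w + 1) b t L = w := by
  set rs := w.splitBy (· < ·)
  have hrun : IsRunDecomposition rs := isRunDecomposition_splitBy hw
  have hflat : rs.flatten = w := List.flatten_splitBy _ w
  have hasc := hrun.ascents_flatten_add_length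
  have hrow := runsRow_length_add_length hrun.1
  rw [hflat] at hasc hrow
  rw [show w.length - ascents w = rs.length by omega,
    show ascents w + 1 = runsRow rs rs.length by omega]
  have hP := isPPoly_runs (rs := rs) (List.splitBy_ne_nil.2 hne)
  refine ⟨_, _, _, hP, allCellsLabelled_runs, validLab_runs hrun (hflat ▸ hpos), ?_⟩
  rw [readLabels_eq_flatten_columns hP allCellsLabelled_runs, columns_runs hrun.1, hflat]

end OfRuns

/-- Labelled parallelogram polyominoes of size `(n-k) × (k+1)` with area `0`
(every cell labelled) are in bijection with Smirnov words of length `n` with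
exactly `k` ascents, by reading the labels bottom to top, left to right. -/
theorem stmt16 (n k : ℕ) (hk : k < n) :
    Set.BijOn
      (fun q : (ℕ → ℕ) × (ℕ → ℕ) × (ℕ × ℕ → ℕ) =>
        readLabels (n - k) (k + 1) q.1 q.2.1 q.2.2)
      {q | IsPPoly (n - k) (k + 1) q.1 q.2.1 ∧
        (∀ i r, 1 ≤ i → i ≤ n - k → q.1 i ≤ r → r ≤ q.2.1 i →
          IsLab (n - k) q.1 q.2.1 i r) ∧
        ValidLab (n - k) q.1 q.2.1 q.2.2}
      {w : List ℕ | w.length = n ∧ (∀ x ∈ w, 0 < x) ∧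
        (∀ i, i + 1 < w.length → w.getD i 0 ≠ w.getD (i + 1) 0) ∧
        Set.ncard {i | i + 1 < w.length ∧ w.getD i 0 < w.getD (i + 1) 0} = k} := by
  refine ⟨?_, ?_, ?_⟩
  · rintro ⟨b, t, L⟩ ⟨hP, hA, hV⟩
    dsimp only at hP hA hV ⊢
    have hlen := length_readLabels (L := L) hP hA
    have hasc := ascents_readLabels_add hP hA hV
    refine ⟨by omega, pos_of_mem_readLabels hP hA hV,
      (isChain_iff_getD _ 0).1 (isChain_ne_readLabels hP hA hV), ?_⟩
    rw [ncard_setOf_ascent]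
    omega
  · rintro ⟨b, t, L⟩ ⟨hP, hA, hV⟩ ⟨b', t', L'⟩ ⟨hP', hA', hV'⟩ heq
    obtain ⟨rfl, rfl, rfl⟩ := eq_of_readLabels_eq hP hA hV hP' hA' hV' heq
    rfl
  · rintro w ⟨rfl, hpos, hne, hasc⟩
    rw [ncard_setOf_ascent] at hasc
    subst hasc
    obtain ⟨b, t, L, hP, hA, hV, hw⟩ := exists_readLabels_eq ((isChain_iff_getD w 0).2 hne) hpos
      (List.ne_nil_of_length_pos (by omega))
    exact ⟨(b, t, L), ⟨hP, hA, hV⟩, hw⟩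
end

section
/- For any segmented Smirnov word w, the standardization st(w) is a segmented permutation of the same shape with the same set of ascents, the same set of descents, and the same set of sminversions as w; in particular sminv(st(w)) = sminv(w). -/
/-- Position `i` is thick: it is the first letter of its block or is preceded
(within its block) by a strictly larger letter. -/
def Thick (w : List ℕ) (B : Finset ℕ) (i : ℕ) : Prop :=
  i ∈ B ∨ w.getD i 0 < w.getD (i - 1) 0

/-- The strict reading order on positions of `w`: smaller letters first; among
equal letters, thin positions right to left, then thick positions left to
right. -/
def ReadLt (w : List ℕ) (B : Finset ℕ) (i j : ℕ) : Prop :=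
  w.getD i 0 < w.getD j 0 ∨
    (w.getD i 0 = w.getD j 0 ∧
      ((¬Thick w B i ∧ Thick w B j) ∨
       (¬Thick w B i ∧ ¬Thick w B j ∧ j < i) ∨
       (Thick w B i ∧ Thick w B j ∧ i < j)))

/-- The standardization of `w`: the letter at position `i` is the rank of `i`
in the reading order. -/
noncomputable def stword (w : List ℕ) (B : Finset ℕ) : List ℕ :=
  (List.range w.length).map fun i =>
    1 + Set.ncard {j | j < w.length ∧ ReadLt w B j i}

section ReadingOrder

variable {w : List ℕ} {B : Finset ℕ} {i j k : ℕ}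

theorem readLt_irrefl (i : ℕ) : ¬ReadLt w B i i := by
  simp [ReadLt]

theorem readLt_trans (hij : ReadLt w B i j) (hjk : ReadLt w B j k) : ReadLt w B i k := by
  unfold ReadLt at *
  grind

theorem readLt_or_readLt_of_ne (hij : i ≠ j) : ReadLt w B i j ∨ ReadLt w B j i := by
  unfold ReadLt
  grind

theorem readLt_iff_of_getD_ne (h : w.getD i 0 ≠ w.getD j 0) :
    ReadLt w B i j ↔ w.getD i 0 < w.getD j 0 := by
  simp only [ReadLt, h, false_and, or_false]

theorem readLt_iff_of_lt (hij : i < j) :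
    ReadLt w B i j ↔ w.getD i 0 < w.getD j 0 ∨ (w.getD i 0 = w.getD j 0 ∧ Thick w B j) := by
  unfold ReadLt
  grind

theorem readLt_iff_of_gt (hij : i < j) :
    ReadLt w B j i ↔ w.getD j 0 < w.getD i 0 ∨ (w.getD j 0 = w.getD i 0 ∧ ¬Thick w B j) := by
  unfold ReadLt
  grind

end ReadingOrder

section Rank

variable (w : List ℕ) (B : Finset ℕ)

noncomputable def readRank (i : ℕ) : ℕ :=
  Set.ncard {j | j < w.length ∧ ReadLt w B j i}

variable {w B} {i j : ℕ}

theorem readRank_lt_readRank (hi : i < w.length) (h : ReadLt w B i j) :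
    readRank w B i < readRank w B j := by
  refine Set.ncard_lt_ncard ?_ ((Set.finite_Iio w.length).subset fun _ hk => hk.1)
  have hsub : {k | k < w.length ∧ ReadLt w B k i} ⊆ {k | k < w.length ∧ ReadLt w B k j} :=
    fun k hk => ⟨hk.1, readLt_trans hk.2 h⟩
  exact (Set.ssubset_iff_of_subset hsub).2 ⟨i, ⟨hi, h⟩, fun hii => readLt_irrefl i hii.2⟩

theorem readRank_lt_readRank_iff (hi : i < w.length) (hj : j < w.length) :
    readRank w B i < readRank w B j ↔ ReadLt w B i j := by
  refine ⟨fun h => ?_, readRank_lt_readRank hi⟩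
  rcases eq_or_ne i j with rfl | hne
  · exact absurd h (lt_irrefl _)
  · exact (readLt_or_readLt_of_ne hne).resolve_right
      fun hji => (readRank_lt_readRank hj hji).not_gt h

theorem readRank_injOn : Set.InjOn (readRank w B) (Set.Iio w.length) := by
  intro i hi j hj h
  by_contra hne
  rcases readLt_or_readLt_of_ne hne with hij | hji
  · exact (readRank_lt_readRank hi hij).ne h
  · exact (readRank_lt_readRank hj hji).ne' h

theorem readRank_lt_length (hi : i < w.length) : readRank w B i < w.length := by
  have hsub : {j | j < w.length ∧ ReadLt w B j i} ⊂ Set.Iio w.length :=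
    (Set.ssubset_iff_of_subset fun _ hk => hk.1).2 ⟨i, hi, fun hii => readLt_irrefl i hii.2⟩
  simpa [readRank] using Set.ncard_lt_ncard hsub

theorem map_readRank_range_perm :
    ((List.range w.length).map (readRank w B)).Perm (List.range w.length) := by
  have hnodup : ((List.range w.length).map (readRank w B)).Nodup :=
    List.nodup_range.map_on fun i hi j hj => readRank_injOn (by simpa using hi) (by simpa using hj)
  refine List.perm_of_nodup_nodup_toFinset_eq hnodup List.nodup_range ?_
  refine Finset.eq_of_subset_of_card_le (fun x hx => ?_) ?_
  · simp only [List.mem_toFinset, List.mem_map, List.mem_range] at hx ⊢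
    obtain ⟨i, hi, rfl⟩ := hx
    exact readRank_lt_length hi
  · rw [List.toFinset_card_of_nodup hnodup, List.toFinset_card_of_nodup List.nodup_range]
    simp

end Rank

section Sminversion

variable {w : List ℕ} {B : Finset ℕ} {i j : ℕ}

-- Away from the case `j = i + 1`, the last three clauses of a sminversion say exactly that
-- `i` is read before `j - 1`.
theorem sminversion_iff_readLt : Sminversion w B i j ↔
    i < j ∧ j < w.length ∧ w.getD j 0 < w.getD i 0 ∧
      (j ∈ B ∨ (i + 1 < j ∧ ReadLt w B i (j - 1))) := by
  unfold Sminversion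
  rcases lt_trichotomy (i + 1) j with hij | hij | hij
  · have hj : j - 1 - 1 = j - 2 := by omega
    rw [readLt_iff_of_lt (by omega : i < j - 1), Thick, hj]
    grind
  · subst hij
    simp
  · grind

theorem getD_lt_of_readLt_of_sminversion_clause (h : IsSSW w B) (hij : i < j)
    (hj : j < w.length) (hji : ReadLt w B j i)
    (hclause : j ∈ B ∨ (i + 1 < j ∧ ReadLt w B i (j - 1))) : w.getD j 0 < w.getD i 0 := by
  rcases (readLt_iff_of_gt hij).1 hji with hlt | ⟨heq, hthin⟩
  · exact hlt
  have hjB : j ∉ B := fun hjB => hthin (Or.inl hjB)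
  obtain ⟨hij', hread⟩ := hclause.resolve_left hjB
  have hsucc : j - 1 + 1 = j := by omega
  -- a thin position inside a block is preceded by a strictly smaller letter
  have hprev : w.getD (j - 1) 0 < w.getD j 0 := by
    have hne := h.2.2.2 (j - 1) (by omega) (by rwa [hsucc])
    rw [hsucc] at hne
    exact lt_of_le_of_ne (not_lt.1 fun hlt => hthin (Or.inr hlt)) hne
  have := (readLt_iff_of_getD_ne (by omega)).1 hread
  omega

end Sminversion

section Standardization

variable {w : List ℕ} {B : Finset ℕ} {i j : ℕ}

theorem length_stword : (stword w B).length = w.length := by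
  simp [stword]

theorem stword_eq_map_readRank :
    stword w B = ((List.range w.length).map (readRank w B)).map (· + 1) := by
  simp only [stword, List.map_map]
  exact List.map_congr_left fun _ _ => add_comm _ _

theorem getD_stword (hi : i < w.length) : (stword w B).getD i 0 = readRank w B i + 1 := by
  simp [stword_eq_map_readRank, hi]

theorem getD_stword_lt_getD_stword_iff (hi : i < w.length) (hj : j < w.length) :
    (stword w B).getD i 0 < (stword w B).getD j 0 ↔ ReadLt w B i j := by
  rw [getD_stword hi, getD_stword hj, Nat.add_lt_add_iff_right, readRank_lt_readRank_iff hi hj]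

theorem getD_stword_lt_getD_stword_iff_of_getD_ne (hi : i < w.length) (hj : j < w.length)
    (h : w.getD i 0 ≠ w.getD j 0) :
    (stword w B).getD i 0 < (stword w B).getD j 0 ↔ w.getD i 0 < w.getD j 0 := by
  rw [getD_stword_lt_getD_stword_iff hi hj, readLt_iff_of_getD_ne h]

theorem getD_stword_ne_getD_stword (hi : i < w.length) (hj : j < w.length) (hij : i ≠ j) :
    (stword w B).getD i 0 ≠ (stword w B).getD j 0 := by
  rw [getD_stword hi, getD_stword hj, ne_eq, Nat.add_right_cancel_iff]
  exact readRank_injOn.ne hi hj hij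

theorem stword_perm : (stword w B).Perm ((List.range w.length).map (· + 1)) := by
  rw [stword_eq_map_readRank]
  exact map_readRank_range_perm.map _

theorem isSSW_stword (h : IsSSW w B) : IsSSW (stword w B) B := by
  obtain ⟨hB, h0, -, -⟩ := h
  refine ⟨fun b hb => length_stword.symm ▸ hB b hb, fun hne => h0 ?_, ?_, ?_⟩
  · rintro rfl
    exact hne rfl
  · simp [stword]
  · intro i hi _
    rw [length_stword] at hi
    exact getD_stword_ne_getD_stword (by omega) hi (by omega)

theorem ascentAt_stword_iff (h : IsSSW w B) (i : ℕ) :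
    AscentAt (stword w B) B i ↔ AscentAt w B i := by
  simp only [AscentAt, length_stword]
  refine and_congr_right fun hi => and_congr_right fun hiB => ?_
  exact getD_stword_lt_getD_stword_iff_of_getD_ne (by omega) hi (h.2.2.2 i hi hiB)

theorem descentAt_stword_iff (h : IsSSW w B) (i : ℕ) :
    DescentAt (stword w B) B i ↔ DescentAt w B i := by
  simp only [DescentAt, length_stword]
  refine and_congr_right fun hi => and_congr_right fun hiB => ?_
  exact getD_stword_lt_getD_stword_iff_of_getD_ne hi (by omega) (h.2.2.2 i hi hiB).symm

theorem sminversion_stword_iff (h : IsSSW w B) (i j : ℕ) :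
    Sminversion (stword w B) B i j ↔ Sminversion w B i j := by
  rw [sminversion_iff_readLt, sminversion_iff_readLt, length_stword]
  refine and_congr_right fun hij => and_congr_right fun hj => ?_
  have hread : i + 1 < j → (ReadLt (stword w B) B i (j - 1) ↔ ReadLt w B i (j - 1)) :=
    fun hij' => by
      rw [readLt_iff_of_getD_ne (getD_stword_ne_getD_stword (by omega) (by omega) (by omega)),
        getD_stword_lt_getD_stword_iff (by omega) (by omega)]
  rw [getD_stword_lt_getD_stword_iff hj (by omega)]
  constructor
  · rintro ⟨hji, hclause⟩
    have hclause' : j ∈ B ∨ (i + 1 < j ∧ ReadLt w B i (j - 1)) :=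
      hclause.imp_right fun ⟨hij', hr⟩ => ⟨hij', (hread hij').1 hr⟩
    exact ⟨getD_lt_of_readLt_of_sminversion_clause h hij hj hji hclause', hclause'⟩
  · rintro ⟨hlt, hclause⟩
    exact ⟨Or.inl hlt, hclause.imp_right fun ⟨hij', hr⟩ => ⟨hij', (hread hij').2 hr⟩⟩

end Standardization

/-- The standardization of a segmented Smirnov word is a segmented permutation
of the same shape, with the same ascents, descents and sminversions; in
particular `sminv (st w) = sminv w`. -/
theorem stmt18 (w : List ℕ) (B : Finset ℕ) (h : IsSSW w B) :
    IsSSW (stword w B) B ∧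
    (stword w B).Perm ((List.range w.length).map (· + 1)) ∧
    (∀ i, AscentAt (stword w B) B i ↔ AscentAt w B i) ∧
    (∀ i, DescentAt (stword w B) B i ↔ DescentAt w B i) ∧
    (∀ i j, Sminversion (stword w B) B i j ↔ Sminversion w B i j) ∧
    sminv (stword w B) B = sminv w B :=
  ⟨isSSW_stword h, stword_perm, ascentAt_stword_iff h, descentAt_stword_iff h,
    sminversion_stword_iff h, congrArg Set.ncard (Set.ext fun p => sminversion_stword_iff h p.1 p.2)⟩
end
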